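/- arXiv:1908.08232 — 6 statements merged into one kernel-verified Lean document; each statement's English description precedes it below -/
import Mathlib

section
/- Let G ⊆ GL(p,ℝ) be a linear Lie group. If R is a sub-ℝ-algebra of E_p such that θ[G]_0(p) is a sub-R-module of θ(p) (i.e., λ·η ∈ θ[G]_0(p) for every λ ∈ R and every η ∈ θ[G]_0(p)), then R ⊆ E_p[G]. In other words, E_p[G] is the maximum ℝ-subalgebra of E_p with respect to θ[G]_0(p). -/
open Filter Topology Matrix

noncomputable section

/-- The model space `(ℝ^p, 0)`. -/
abbrev E (p : ℕ) : Type := Fin p → ℝ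

/-- The Jacobian matrix of a map `η : ℝ^p → ℝ^p` at `y`: entry `(i,j)` is `∂η_i/∂y_j (y)`. -/
def jac {p : ℕ} (η : E p → E p) (y : E p) : Matrix (Fin p) (Fin p) ℝ :=
  Matrix.of fun i j => fderiv ℝ η y (Pi.single j 1) i

/-- `θ[G](p)`: germs (represented by smooth functions) of vector fields on `(ℝ^p,0)` whose
Jacobian matrix lies in `g` (the Lie algebra of `G`) at every point near `0`. -/
def thetaG (p : ℕ) (g : Set (Matrix (Fin p) (Fin p) ℝ)) : Set (E p → E p) :=
  {η | ContDiff ℝ (⊤ : ℕ∞) η ∧ ∀ᶠ y in 𝓝 (0 : E p), jac η y ∈ g}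

/-- `θ[G]_0(p)`: elements of `θ[G](p)` vanishing at the origin. -/
def thetaG0 (p : ℕ) (g : Set (Matrix (Fin p) (Fin p) ℝ)) : Set (E p → E p) :=
  {η | η ∈ thetaG p g ∧ η 0 = 0}

/-- Partial derivative `∂λ/∂y_j (y)`. -/
def pd {p : ℕ} (j : Fin p) (lam : E p → ℝ) (y : E p) : ℝ :=
  fderiv ℝ lam y (Pi.single j 1)

/-- `grad_y λ (η)`: the matrix with `(i,j)` entry `η_i(y) · ∂λ/∂y_j (y)`. -/
def gradMat {p : ℕ} (lam : E p → ℝ) (η : E p → E p) (y : E p) : Matrix (Fin p) (Fin p) ℝ :=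
  Matrix.of fun i j => η y i * pd j lam y

/-- `E_p[G]`: smooth function germs `λ` with `grad_y λ (η) ∈ 𝔤(E_p)` for all `η ∈ θ[G]_0(p)`. -/
def EpG (p : ℕ) (g : Set (Matrix (Fin p) (Fin p) ℝ)) : Set (E p → ℝ) :=
  {lam | ContDiff ℝ (⊤ : ℕ∞) lam ∧
    ∀ η ∈ thetaG0 p g, ∀ᶠ y in 𝓝 (0 : E p), gradMat lam η y ∈ g}

/-- `𝔰𝔬(p)`: antisymmetric matrices. -/
def sop (p : ℕ) : Set (Matrix (Fin p) (Fin p) ℝ) := {X | Xᵀ = -X}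

/-- `SO(p)` as a set of matrices. -/
def SOset (p : ℕ) : Set (Matrix (Fin p) (Fin p) ℝ) := {A | Aᵀ * A = 1 ∧ A.det = 1}

/-- `Diff[G](p)`: germs of diffeomorphisms of `(ℝ^p,0)` whose Jacobian lies in the group `𝒢`
at every point near `0`. -/
def DiffG (p : ℕ) (𝒢 : Set (Matrix (Fin p) (Fin p) ℝ)) (ψ : E p → E p) : Prop :=
  ContDiff ℝ (⊤ : ℕ∞) ψ ∧ ψ 0 = 0 ∧ ∀ᶠ y in 𝓝 (0 : E p), jac ψ y ∈ 𝒢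

/-- `Diff_0[G](p)`: members of `Diff[G](p)` isotopic to the identity through `Diff[G](p)`. -/
def Diff0G (p : ℕ) (𝒢 : Set (Matrix (Fin p) (Fin p) ℝ)) (ψ : E p → E p) : Prop :=
  DiffG p 𝒢 ψ ∧ ∃ Ψ : ℝ × E p → E p, ContDiff ℝ (⊤ : ℕ∞) Ψ ∧
    (∀ t ∈ Set.Icc (0:ℝ) 1, DiffG p 𝒢 (fun y => Ψ (t, y))) ∧
    (∀ᶠ y in 𝓝 (0 : E p), Ψ (0, y) = y) ∧ (∀ᶠ y in 𝓝 (0 : E p), Ψ (1, y) = ψ y)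

/-- A germ of diffeomorphism `φ : (ℝ^n,0) → (ℝ^n,0)` of the source. -/
def SourceDiffeo (n : ℕ) (φ : E n → E n) : Prop :=
  ContDiff ℝ (⊤ : ℕ∞) φ ∧ φ 0 = 0 ∧ Function.Bijective ⇑(fderiv ℝ φ 0)


/-- If `R` is a sub-ℝ-algebra of `E_p` (consisting of smooth germs) such that
`θ[G]_0(p)` is a sub-`R`-module of `θ(p)`, then `R ⊆ E_p[G]`; that is, `E_p[G]` is the maximum
ℝ-subalgebra of `E_p` with respect to `θ[G]_0(p)`.  Here `𝔤` is the Lie algebra of the linear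
Lie group `G ⊆ GL(p,ℝ)`, an ℝ-linear subspace of `M_p(ℝ)`. -/
theorem stmt_0 (p : ℕ) (g : Submodule ℝ (Matrix (Fin p) (Fin p) ℝ))
    (R : Subalgebra ℝ (E p → ℝ))
    (hRsmooth : ∀ lam ∈ R, ContDiff ℝ (⊤ : ℕ∞) lam)
    (hRmod : ∀ lam ∈ R, ∀ η ∈ thetaG0 p (g : Set (Matrix (Fin p) (Fin p) ℝ)),
      (fun y => lam y • η y) ∈ thetaG0 p (g : Set (Matrix (Fin p) (Fin p) ℝ))) :
    ∀ lam ∈ R, lam ∈ EpG p (g : Set (Matrix (Fin p) (Fin p) ℝ)) := by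
  intro lam hlam
  refine ⟨hRsmooth lam hlam, ?_⟩
  intro η hη
  have hsm := hRmod lam hlam η hη
  filter_upwards [hsm.1.2, hη.1.2] with y hy1 hy2
  have hlamd : DifferentiableAt ℝ lam y :=
    (hRsmooth lam hlam).differentiable (by simp) y
  have hηd : DifferentiableAt ℝ η y := hη.1.1.differentiable (by simp) y
  have key : gradMat lam η y = jac (fun z => lam z • η z) y - lam y • jac η y := by
    ext i j
    simp only [gradMat, jac, pd, Matrix.of_apply, Matrix.sub_apply, Matrix.smul_apply,
      fderiv_fun_smul hlamd hηd, ContinuousLinearMap.add_apply, ContinuousLinearMap.smul_apply,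
      ContinuousLinearMap.smulRight_apply, Pi.add_apply, Pi.smul_apply, smul_eq_mul]
    ring
  rw [key]
  exact Submodule.sub_mem g hy1 (Submodule.smul_mem g _ hy2)
end
end

section
/- For any linear Lie group G ⊆ GL(p,ℝ), the ℝ-subalgebra E_p[G] of E_p is a C∞-subring of E_p: for any λ_1,…,λ_r ∈ E_p[G] and any smooth function germ f ∈ E_r, the composite germ y ↦ f(λ_1(y),…,λ_r(y)) belongs to E_p[G]. -/
open Filter Topology Matrix

noncomputable section

/-- For any linear Lie group `G ⊆ GL(p,ℝ)` (with Lie algebra `𝔤`, an ℝ-linear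
subspace of `M_p(ℝ)`), the ℝ-subalgebra `E_p[G]` of `E_p` is a `C^∞`-subring of `E_p`:
for any `λ_1, …, λ_r ∈ E_p[G]` and any smooth germ `f ∈ E_r`, the composite germ
`y ↦ f(λ_1(y), …, λ_r(y))` belongs to `E_p[G]`. -/
theorem stmt_1 (p r : ℕ) (g : Submodule ℝ (Matrix (Fin p) (Fin p) ℝ))
    (lam : Fin r → (E p → ℝ))
    (hlam : ∀ k, lam k ∈ EpG p (g : Set (Matrix (Fin p) (Fin p) ℝ)))
    (f : (Fin r → ℝ) → ℝ) (hf : ContDiff ℝ (⊤ : ℕ∞) f) :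
    (fun y => f (fun k => lam k y)) ∈ EpG p (g : Set (Matrix (Fin p) (Fin p) ℝ)) := by
  have hLk : ∀ k, ContDiff ℝ (⊤ : ℕ∞) (lam k) := fun k => (hlam k).1
  have hL : ContDiff ℝ (⊤ : ℕ∞) (fun y : E p => fun k => lam k y) :=
    contDiff_pi.2 hLk
  refine ⟨hf.comp hL, ?_⟩
  intro η hη
  have hev : ∀ᶠ y in 𝓝 (0 : E p), ∀ k, gradMat (lam k) η y ∈ g := by
    rw [eventually_all]
    exact fun k => (hlam k).2 η hη
  filter_upwards [hev] with y hy
  set L : E p → (Fin r → ℝ) := fun y => fun k => lam k y with hLdef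
  have hfd : DifferentiableAt ℝ f (L y) := hf.differentiable (by simp) _
  have hLd : DifferentiableAt ℝ L y := hL.differentiable (by simp) y
  have hchain : fderiv ℝ (fun y => f (L y)) y = (fderiv ℝ f (L y)).comp (fderiv ℝ L y) :=
    fderiv_comp y hfd hLd
  have hLf : fderiv ℝ L y = ContinuousLinearMap.pi (fun k => fderiv ℝ (lam k) y) :=
    fderiv_pi (fun k => (hLk k).differentiable (by simp) y)
  set c : Fin r → ℝ := fun k => fderiv ℝ f (L y) (Pi.single k 1) with hc
  have hpd : ∀ j, pd j (fun y => f (L y)) y = ∑ k, c k * pd j (lam k) y := by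
    intro j
    have hexp : (fderiv ℝ L y (Pi.single j 1)) = ∑ k, (pd j (lam k) y) • (Pi.single k 1 : Fin r → ℝ) := by
      rw [hLf]
      ext k
      simp [pd, Finset.sum_apply, Pi.single_apply]
    unfold pd
    rw [hchain]
    simp only [ContinuousLinearMap.comp_apply, hexp, map_sum, _root_.map_smul]
    simp [hc, mul_comm, pd]
  have : gradMat (fun y => f (L y)) η y = ∑ k, c k • gradMat (lam k) η y := by
    ext i j
    simp only [gradMat, Matrix.of_apply, hpd j, Finset.sum_apply, Matrix.sum_apply,
      Matrix.smul_apply, smul_eq_mul, Finset.mul_sum]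
    exact Finset.sum_congr rfl fun k _ => by ring
  rw [show (fun y => f (fun k => lam k y)) = fun y => f (L y) from rfl, this]
  exact Submodule.sum_mem g (fun k _ => Submodule.smul_mem g _ (hy k))
end
end

section
/- E_2[SL(2,ℝ)] = ℝ: if λ ∈ E_2 satisfies η_1·(∂λ/∂y_1) + η_2·(∂λ/∂y_2) = 0 for every germ of vector field (η_1,η_2) with ∂η_1/∂y_1 + ∂η_2/∂y_2 = 0 and η_1(0) = η_2(0) = 0, then λ is a constant germ. In particular it suffices that λ satisfies the two equations y_2·∂λ/∂y_1 + y_1·∂λ/∂y_2 = 0 and y_1·∂λ/∂y_1 − y_2·∂λ/∂y_2 = 0 to conclude λ is constant. -/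
open Filter Topology Matrix

noncomputable section

/-- `𝔰𝔩(p,ℝ)`: traceless matrices. -/
def slset (p : ℕ) : Set (Matrix (Fin p) (Fin p) ℝ) := {X | X.trace = 0}

-- part 2 as a lemma
theorem part2 (lam : E 2 → ℝ) (hsm : ContDiff ℝ (⊤ : ℕ∞) lam)
    (h1 : ∀ᶠ y in 𝓝 (0 : E 2), y 1 * pd 0 lam y + y 0 * pd 1 lam y = 0)
    (h2 : ∀ᶠ y in 𝓝 (0 : E 2), y 0 * pd 0 lam y - y 1 * pd 1 lam y = 0) :
    ∀ᶠ y in 𝓝 (0 : E 2), lam y = lam 0 := by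
  obtain ⟨ε, hε, hball⟩ := Metric.eventually_nhds_iff_ball.1 (h1.and h2)
  -- pd is continuous
  have hdiff : Differentiable ℝ lam := hsm.differentiable (by simp)
  have hcont : ∀ j : Fin 2, Continuous (pd j lam) := by
    intro j
    exact ((hsm.continuous_fderiv (by simp)).clm_apply continuous_const)
  -- pd vanishes on the punctured ball
  have hpun : ∀ y ∈ Metric.ball (0 : E 2) ε, y ≠ 0 → pd 0 lam y = 0 ∧ pd 1 lam y = 0 := by
    intro y hy hy0
    obtain ⟨e1, e2⟩ := hball y hy
    have hsq : y 0 ^ 2 + y 1 ^ 2 ≠ 0 := by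
      intro h
      apply hy0
      have h0 : y 0 = 0 := by nlinarith [sq_nonneg (y 0), sq_nonneg (y 1)]
      have h1' : y 1 = 0 := by nlinarith [sq_nonneg (y 0), sq_nonneg (y 1)]
      funext i; fin_cases i <;> simpa
    constructor
    · have : (y 0 ^ 2 + y 1 ^ 2) * pd 0 lam y = 0 := by
        linear_combination y 1 * e1 + y 0 * e2
      exact (mul_eq_zero.1 this).resolve_left hsq
    · have : (y 0 ^ 2 + y 1 ^ 2) * pd 1 lam y = 0 := by
        linear_combination y 0 * e1 - y 1 * e2
      exact (mul_eq_zero.1 this).resolve_left hsq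
  -- pd vanishes on all of the ball (at 0 by continuity)
  have hzero : ∀ y ∈ Metric.ball (0 : E 2) ε, ∀ j : Fin 2, pd j lam y = 0 := by
    intro y hy j
    rcases eq_or_ne y 0 with rfl | hne
    · -- continuity argument at 0
      have hnb : (𝓝[≠] (0 : E 2)).NeBot := Module.punctured_nhds_neBot ℝ (E 2) 0
      have ht1 : Tendsto (pd j lam) (𝓝[≠] (0 : E 2)) (𝓝 (pd j lam 0)) :=
        ((hcont j).tendsto 0).mono_left nhdsWithin_le_nhds
      have ht2 : Tendsto (pd j lam) (𝓝[≠] (0 : E 2)) (𝓝 0) := by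
        apply Tendsto.congr' _ tendsto_const_nhds
        have hb : Metric.ball (0 : E 2) ε ∈ 𝓝 (0 : E 2) := Metric.ball_mem_nhds _ hε
        filter_upwards [nhdsWithin_le_nhds hb, self_mem_nhdsWithin] with z hz hz0
        have := hpun z hz hz0
        fin_cases j
        · exact (this.1).symm
        · exact (this.2).symm
      exact tendsto_nhds_unique ht1 ht2
    · have := hpun y hy hne
      fin_cases j
      · exact this.1
      · exact this.2
  -- hence fderiv vanishes on the ball
  have hfd : ∀ y ∈ Metric.ball (0 : E 2) ε, fderiv ℝ lam y = 0 := by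
    intro y hy
    ext v
    have hv : v = v 0 • (Pi.single 0 1 : E 2) + v 1 • (Pi.single 1 1 : E 2) := by
      funext i; fin_cases i <;> simp
    have h0 := hzero y hy 0
    have h1' := hzero y hy 1
    simp only [pd] at h0 h1'
    rw [hv, map_add, (fderiv ℝ lam y).map_smul, (fderiv ℝ lam y).map_smul, h0, h1']
    simp
  have key : ∀ y ∈ Metric.ball (0 : E 2) ε, lam y = lam 0 := by
    intro y hy
    have := (convex_ball (0 : E 2) ε).norm_image_sub_le_of_norm_fderiv_le
      (f := lam) (C := 0) (fun x _ => hdiff x)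
      (fun x hx => by rw [hfd x hx]; simp) (Metric.mem_ball_self hε) hy
    simpa [sub_eq_zero] using this
  exact Metric.eventually_nhds_iff_ball.2 ⟨ε, hε, key⟩

/-- `E_2[SL(2,ℝ)] = ℝ`: if a smooth germ `λ ∈ E_2` satisfies
`η_1·∂λ/∂y_1 + η_2·∂λ/∂y_2 = 0` for every germ of divergence-free vector field `(η_1,η_2)`
vanishing at `0`, then `λ` is a constant germ.  In particular, the two equations
`y_2·∂λ/∂y_1 + y_1·∂λ/∂y_2 = 0` and `y_1·∂λ/∂y_1 − y_2·∂λ/∂y_2 = 0` already force `λ` to be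
constant. -/
theorem stmt_9 :
    (∀ lam : E 2 → ℝ, ContDiff ℝ (⊤ : ℕ∞) lam →
      (∀ η ∈ thetaG0 2 (slset 2),
        ∀ᶠ y in 𝓝 (0 : E 2), η y 0 * pd 0 lam y + η y 1 * pd 1 lam y = 0) →
      ∀ᶠ y in 𝓝 (0 : E 2), lam y = lam 0)
    ∧ (∀ lam : E 2 → ℝ, ContDiff ℝ (⊤ : ℕ∞) lam →
        (∀ᶠ y in 𝓝 (0 : E 2), y 1 * pd 0 lam y + y 0 * pd 1 lam y = 0) →
        (∀ᶠ y in 𝓝 (0 : E 2), y 0 * pd 0 lam y - y 1 * pd 1 lam y = 0) →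
        ∀ᶠ y in 𝓝 (0 : E 2), lam y = lam 0) := by
  constructor
  · intro lam hsm hη
    -- two linear vector fields
    let L1 : E 2 →L[ℝ] E 2 := ContinuousLinearMap.pi
      ![ContinuousLinearMap.proj 1, ContinuousLinearMap.proj 0]
    let L2 : E 2 →L[ℝ] E 2 := ContinuousLinearMap.pi
      ![ContinuousLinearMap.proj 0, -ContinuousLinearMap.proj 1]
    have hmem : ∀ L : E 2 →L[ℝ] E 2,
        (∀ y, jac (⇑L) y ∈ slset 2) → (⇑L) ∈ thetaG0 2 (slset 2) := by
      intro L hL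
      exact ⟨⟨L.contDiff, Eventually.of_forall hL⟩, map_zero L⟩
    have hjac : ∀ (L : E 2 →L[ℝ] E 2) (y : E 2) (i j : Fin 2),
        jac (⇑L) y i j = L (Pi.single j 1) i := by
      intro L y i j
      simp [jac, L.fderiv]
    have hm1 : (⇑L1) ∈ thetaG0 2 (slset 2) := by
      apply hmem; intro y
      show (jac (⇑L1) y).trace = 0
      rw [Matrix.trace_fin_two, hjac, hjac]
      simp [L1]
    have hm2 : (⇑L2) ∈ thetaG0 2 (slset 2) := by
      apply hmem; intro y
      show (jac (⇑L2) y).trace = 0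
      rw [Matrix.trace_fin_two, hjac, hjac]
      simp [L2]
    have e1 := hη _ hm1
    have e2 := hη _ hm2
    apply part2 lam hsm
    · filter_upwards [e1] with y hy
      simpa [L1] using hy
    · filter_upwards [e2] with y hy
      have : y 0 * pd 0 lam y + -(y 1) * pd 1 lam y = 0 := by simpa [L2] using hy
      linarith
  · exact part2
end
end

section
/- For smooth map germs f,g:(ℝ^n,0)→(ℝ^p,0): f and g are A_0[SO(p)]-equivalent if and only if f and g are congruent, i.e., R×SO(p)-equivalent. -/
open Filter Topology Matrix

noncomputable section

/-! ### Auxiliary lemmas -/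

lemma hasFDerivAt_mulVec {p : ℕ} (M : Matrix (Fin p) (Fin p) ℝ) (y : E p) :
    HasFDerivAt (fun v : E p => M.mulVec v) (M.mulVecLin.toContinuousLinearMap) y :=
  (M.mulVecLin.toContinuousLinearMap).hasFDerivAt

lemma contDiff_mulVec {p : ℕ} (M : Matrix (Fin p) (Fin p) ℝ) :
    ContDiff ℝ (⊤ : ℕ∞) (fun v : E p => M.mulVec v) :=
  (M.mulVecLin.toContinuousLinearMap).contDiff

lemma jac_mulVec {p : ℕ} (M : Matrix (Fin p) (Fin p) ℝ) (y : E p) :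
    jac (fun v : E p => M.mulVec v) y = M := by
  ext i j
  simp [jac, (hasFDerivAt_mulVec M y).fderiv, Matrix.mulVec_single]

lemma basis_sum {p : ℕ} (v : E p) : ∑ c : Fin p, v c • (Pi.single c 1 : E p) = v := by
  ext j
  simp [Pi.single_apply]

section Givens
variable {p : ℕ} {u v : E p}

/-- outer product facts -/
lemma vmv_mul (a b c d : E p) :
    vecMulVec a b * vecMulVec c d = (b ⬝ᵥ c) • vecMulVec a d := by
  ext i j
  simp [Matrix.mul_apply, vecMulVec_apply, dotProduct, Finset.mul_sum, Finset.sum_mul]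
  congr 1; ext k; ring

lemma vmv_mulVec (a b x : E p) : (vecMulVec a b).mulVec x = (b ⬝ᵥ x) • a := by
  ext i
  simp [Matrix.mulVec, vecMulVec_apply, dotProduct, Finset.mul_sum, Finset.sum_mul]
  congr 1; ext k; ring

lemma vmv_transpose (a b : E p) : (vecMulVec a b)ᵀ = vecMulVec b a := by
  ext i j; simp [vecMulVec_apply, mul_comm]

/-- The Givens rotation by angle θ in the plane spanned by orthonormal u, v. -/
def giv (u v : E p) (θ : ℝ) : Matrix (Fin p) (Fin p) ℝ :=
  1 + (Real.cos θ - 1) • (vecMulVec u u + vecMulVec v v)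
    + Real.sin θ • (vecMulVec v u - vecMulVec u v)

lemma giv_orth (hu : u ⬝ᵥ u = 1) (hv : v ⬝ᵥ v = 1) (huv : u ⬝ᵥ v = 0) (θ : ℝ) :
    (giv u v θ)ᵀ * giv u v θ = 1 := by
  have hvu : v ⬝ᵥ u = 0 := by rwa [dotProduct_comm]
  set P : Matrix (Fin p) (Fin p) ℝ := vecMulVec u u + vecMulVec v v with hP
  set J : Matrix (Fin p) (Fin p) ℝ := vecMulVec v u - vecMulVec u v with hJ
  have hPt : Pᵀ = P := by simp [hP, transpose_add, vmv_transpose]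
  have hJt : Jᵀ = -J := by
    rw [hJ, transpose_sub, vmv_transpose, vmv_transpose, neg_sub]
  have hPP : P * P = P := by
    simp [hP, mul_add, add_mul, vmv_mul, hu, hv, huv, hvu]
  have hJJ : J * J = -P := by
    simp only [hJ, hP, mul_sub, sub_mul, vmv_mul, hu, hv, huv, hvu]
    simp only [one_smul, zero_smul, sub_zero, zero_sub, neg_add_rev]
    abel
  have hPJ : P * J = J := by
    simp [hP, hJ, mul_sub, sub_mul, mul_add, add_mul, vmv_mul, hu, hv, huv, hvu]
  have hJP : J * P = J := by
    simp [hP, hJ, mul_sub, sub_mul, mul_add, add_mul, vmv_mul, hu, hv, huv, hvu]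
    exact (sub_eq_add_neg _ _).symm
  set c := Real.cos θ - 1
  set s := Real.sin θ
  have hcs : 2 * c + c ^ 2 + s ^ 2 = 0 := by
    have := Real.sin_sq_add_cos_sq θ
    simp only [c, s]; nlinarith
  have : (giv u v θ)ᵀ = 1 + c • P - s • J := by
    rw [giv, transpose_add, transpose_add, transpose_smul, transpose_smul, transpose_one,
      hPt, hJt, smul_neg, ← sub_eq_add_neg]
  rw [this, giv]
  have expand : (1 + c • P - s • J) * (1 + c • P + s • J)
      = 1 + (2 * c + c ^ 2 + s ^ 2) • P := by
    simp only [mul_add, add_mul, sub_mul, mul_sub, one_mul, mul_one, smul_mul_smul_comm,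
      Matrix.smul_mul, Matrix.mul_smul, hPP, hJJ, hPJ, hJP, smul_neg]
    module
  rw [show (1 : Matrix (Fin p) (Fin p) ℝ) + c • P + s • J = 1 + c • P + s • J from rfl] at *
  rw [expand, hcs, zero_smul, add_zero]


section Det
variable {p : ℕ}

lemma SOset_mul {A B : Matrix (Fin p) (Fin p) ℝ} (hA : A ∈ SOset p) (hB : B ∈ SOset p) :
    A * B ∈ SOset p := by
  obtain ⟨hA1, hA2⟩ := hA; obtain ⟨hB1, hB2⟩ := hB
  constructor
  · rw [transpose_mul, mul_assoc, ← mul_assoc Aᵀ, hA1, one_mul, hB1]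
  · rw [det_mul, hA2, hB2, one_mul]

lemma SOset_one : (1 : Matrix (Fin p) (Fin p) ℝ) ∈ SOset p := by
  constructor <;> simp

/-- If a continuous family of matrices is orthogonal for each t and equals 1 at 0,
then det = 1 for all t. -/
lemma det_one_of_path {γ : ℝ → Matrix (Fin p) (Fin p) ℝ}
    (hc : Continuous fun t => (γ t).det) (h0 : γ 0 = 1)
    (horth : ∀ t, (γ t)ᵀ * γ t = 1) (t : ℝ) : (γ t).det = 1 := by
  have hsq : ∀ s, (γ s).det = 1 ∨ (γ s).det = -1 := by
    intro s
    have : (γ s).det * (γ s).det = 1 := by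
      have := congrArg Matrix.det (horth s)
      rwa [det_mul, det_transpose, det_one] at this
    rcases mul_self_eq_one_iff.1 this with h | h
    · exact Or.inl h
    · exact Or.inr h
  by_contra hne
  rcases hsq t with h | h
  · exact hne h
  have h0' : (γ 0).det = 1 := by rw [h0, det_one]
  have hsub : Set.uIcc ((γ 0).det) ((γ t).det) ⊆ (fun s => (γ s).det) '' Set.uIcc 0 t :=
    intermediate_value_uIcc hc.continuousOn
  have h0mem : (0 : ℝ) ∈ Set.uIcc ((γ 0).det) ((γ t).det) := by
    rw [h0', h]
    exact Set.mem_uIcc.2 (Or.inr ⟨by norm_num, by norm_num⟩)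
  obtain ⟨s, _, hs⟩ := hsub h0mem
  simp only [] at hs
  rcases hsq s with h' | h' <;> rw [h'] at hs <;> norm_num at hs
end Det


section Giv
variable {p : ℕ} (u v : E p)

lemma giv_zero : giv u v 0 = 1 := by simp [giv]

lemma giv_entry_contDiff (i j : Fin p) : ContDiff ℝ (⊤ : ℕ∞) (fun θ => giv u v θ i j) := by
  have : (fun θ => giv u v θ i j) = fun θ =>
      (1 : Matrix (Fin p) (Fin p) ℝ) i j
      + (Real.cos θ - 1) * ((vecMulVec u u + vecMulVec v v) i j)
      + Real.sin θ * ((vecMulVec v u - vecMulVec u v) i j) := by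
    funext θ; simp [giv, mul_add]
  rw [this]
  exact (contDiff_const.add
    ((Real.contDiff_cos.sub contDiff_const).mul contDiff_const)).add
    (Real.contDiff_sin.mul contDiff_const)

lemma giv_mulVec (θ : ℝ) (x : E p) :
    (giv u v θ).mulVec x = x + (Real.cos θ - 1) • ((u ⬝ᵥ x) • u + (v ⬝ᵥ x) • v)
      + Real.sin θ • ((u ⬝ᵥ x) • v - (v ⬝ᵥ x) • u) := by
  simp [giv, add_mulVec, sub_mulVec, smul_mulVec, vmv_mulVec, one_mulVec, smul_add, smul_sub]
end Giv


lemma giv_SO {p : ℕ} {u v : E p} (hu : u ⬝ᵥ u = 1) (hv : v ⬝ᵥ v = 1) (huv : u ⬝ᵥ v = 0)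
    (θ : ℝ) : giv u v θ ∈ SOset p := by
  refine ⟨giv_orth hu hv huv θ, ?_⟩
  exact det_one_of_path
    (Continuous.matrix_det (continuous_matrix fun i j => (giv_entry_contDiff u v i j).continuous))
    (giv_zero u v) (fun t => giv_orth hu hv huv t) θ

lemma reach {p k : ℕ} (hk : k < p) (w : E p) (hw1 : w ⬝ᵥ w = 1)
    (hwi : ∀ i : Fin p, (i : ℕ) < k → w i = 0)
    (hneg : w = -(Pi.single (⟨k, hk⟩ : Fin p) 1 : E p) → k + 1 < p) :
    ∃ γ : ℝ → Matrix (Fin p) (Fin p) ℝ,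
      (∀ i j, ContDiff ℝ (⊤ : ℕ∞) fun t => γ t i j) ∧ γ 0 = 1 ∧ (∀ t, γ t ∈ SOset p) ∧
      (γ 1).mulVec (Pi.single (⟨k, hk⟩ : Fin p) 1) = w ∧
      ∀ (t : ℝ) (i : Fin p), (i : ℕ) < k → (γ t).mulVec (Pi.single i 1) = Pi.single i 1 := by
  set u : E p := Pi.single (⟨k, hk⟩ : Fin p) 1 with hu_def
  have hu : u ⬝ᵥ u = 1 := by simp [hu_def, single_dotProduct, Pi.single_apply]
  have hui : ∀ i : Fin p, (i : ℕ) < k → u ⬝ᵥ (Pi.single i 1 : E p) = 0 := by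
    intro i hi
    rw [dotProduct_single, mul_one, hu_def, Pi.single_apply]
    simp only [ite_eq_right_iff]
    intro h; subst h; simp only [Fin.val_mk] at hi; omega
  by_cases hwu : w = u
  · refine ⟨fun _ => 1, fun i j => contDiff_const, rfl, fun t => ⟨by simp, by simp⟩, ?_, ?_⟩
    · rw [one_mulVec, ← hwu]
    · intro t i _; rw [one_mulVec]
  by_cases hwnu : w = -u
  · -- half turn in plane (e_k, e_{k+1})
    have hk1 : k + 1 < p := hneg hwnu
    set v : E p := Pi.single (⟨k + 1, hk1⟩ : Fin p) 1 with hv_def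
    have hv : v ⬝ᵥ v = 1 := by simp [hv_def, single_dotProduct, Pi.single_apply]
    have huv : u ⬝ᵥ v = 0 := by
      rw [hu_def, hv_def, single_dotProduct, one_mul, Pi.single_apply]
      simp [Fin.ext_iff]
    have hvu : v ⬝ᵥ u = 0 := by rwa [dotProduct_comm]
    have hvi : ∀ i : Fin p, (i : ℕ) < k → v ⬝ᵥ (Pi.single i 1 : E p) = 0 := by
      intro i hi
      rw [dotProduct_single, mul_one, hv_def, Pi.single_apply]
      simp only [ite_eq_right_iff]
      intro h; subst h; simp only [Fin.val_mk] at hi; omega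
    refine ⟨fun t => giv u v (t * Real.pi), ?_, ?_, ?_, ?_, ?_⟩
    · intro i j
      exact (giv_entry_contDiff u v i j).comp (contDiff_id.mul contDiff_const)
    · show giv u v (0 * Real.pi) = 1
      rw [zero_mul, giv_zero]
    · intro t; exact giv_SO hu hv huv _
    · show (giv u v (1 * Real.pi)) *ᵥ u = w
      rw [one_mul, giv_mulVec, hu, hvu, hwnu]
      simp [Real.cos_pi, Real.sin_pi]
      module
    · intro t i hi
      rw [giv_mulVec, hui i hi, hvi i hi]
      simp
  · -- generic rotation
    set c0 : ℝ := w ⬝ᵥ u with hc0_def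
    set d : E p := w - c0 • u with hd_def
    have hud : u ⬝ᵥ d = 0 := by
      rw [hd_def, dotProduct_sub, dotProduct_smul, hu, dotProduct_comm, smul_eq_mul, mul_one,
        sub_self]
    have hdd : d ⬝ᵥ d = 1 - c0 ^ 2 := by
      simp only [hd_def, sub_dotProduct, dotProduct_sub, smul_dotProduct, dotProduct_smul,
        hu, hw1, dotProduct_comm u w, ← hc0_def, smul_eq_mul]
      ring
    have hdnn : 0 ≤ d ⬝ᵥ d := Finset.sum_nonneg fun i _ => mul_self_nonneg _
    have hdne : d ≠ 0 := by
      intro h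
      have hw' : w = c0 • u := by rwa [hd_def, sub_eq_zero] at h
      have : c0 ^ 2 = 1 := by
        have := hw1
        rw [hw', smul_dotProduct, dotProduct_smul, hu] at this
        simpa [smul_eq_mul, sq] using this
      have h2 : c0 * c0 = 1 := by nlinarith
      rcases mul_self_eq_one_iff.mp h2 with h1 | h1
      · exact hwu (by rw [hw', h1, one_smul])
      · apply hwnu; rw [hw', h1]; module
    have hdpos : 0 < d ⬝ᵥ d :=
      lt_of_le_of_ne hdnn fun h => hdne (dotProduct_self_eq_zero.mp h.symm)
    set s0 : ℝ := Real.sqrt (d ⬝ᵥ d) with hs0_def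
    have hs0 : s0 * s0 = d ⬝ᵥ d := Real.mul_self_sqrt hdnn
    have hs0pos : 0 < s0 := Real.sqrt_pos.mpr hdpos
    set v : E p := s0⁻¹ • d with hv_def
    have hvv : v ⬝ᵥ v = 1 := by
      rw [hv_def, smul_dotProduct, dotProduct_smul, smul_eq_mul, smul_eq_mul, ← hs0]
      field_simp
    have huv : u ⬝ᵥ v = 0 := by rw [hv_def, dotProduct_smul, hud, smul_zero]
    have hvu : v ⬝ᵥ u = 0 := by rwa [dotProduct_comm]
    have hvi : ∀ i : Fin p, (i : ℕ) < k → v ⬝ᵥ (Pi.single i 1 : E p) = 0 := by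
      intro i hi
      rw [hv_def, smul_dotProduct, dotProduct_single, mul_one, hd_def]
      have hui0 : u i = 0 := by
        rw [hu_def, Pi.single_apply]
        simp only [ite_eq_right_iff]
        intro h; subst h; simp only [Fin.val_mk] at hi; omega
      simp [Pi.sub_apply, hwi i hi, hui0]
    have hc1 : c0 ^ 2 ≤ 1 := by nlinarith
    set th : ℝ := Real.arccos c0 with hth_def
    have hcos : Real.cos th = c0 := Real.cos_arccos (by nlinarith) (by nlinarith)
    have hsin : Real.sin th = s0 := by
      rw [hth_def, Real.sin_arccos, hs0_def, hdd]
    have hwdecomp : w = c0 • u + s0 • v := by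
      rw [hv_def, smul_smul, mul_inv_cancel₀ (ne_of_gt hs0pos), one_smul, hd_def]
      module
    refine ⟨fun t => giv u v (t * th), ?_, ?_, ?_, ?_, ?_⟩
    · intro i j
      exact (giv_entry_contDiff u v i j).comp (contDiff_id.mul contDiff_const)
    · show giv u v (0 * th) = 1
      rw [zero_mul, giv_zero]
    · intro t; exact giv_SO hu hvv huv _
    · show (giv u v (1 * th)) *ᵥ u = w
      rw [one_mul, giv_mulVec, hu, hvu, hcos, hsin, hwdecomp]
      module
    · intro t i hi
      rw [giv_mulVec, hui i hi, hvi i hi]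
      simp


lemma mulVec_dot {p : ℕ} {A : Matrix (Fin p) (Fin p) ℝ} (hA : Aᵀ * A = 1) (x y : E p) :
    (A.mulVec x) ⬝ᵥ (A.mulVec y) = x ⬝ᵥ y := by
  calc (A.mulVec x) ⬝ᵥ (A.mulVec y) = (Aᵀ.mulVec (A.mulVec x)) ⬝ᵥ y := by
        rw [dotProduct_mulVec, ← Matrix.mulVec_transpose]
      _ = x ⬝ᵥ y := by rw [mulVec_mulVec, hA, one_mulVec]

lemma so_path_aux (p : ℕ) : ∀ m k, p ≤ k + m → ∀ A ∈ SOset p,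
    (∀ i : Fin p, (i : ℕ) < k → A.mulVec (Pi.single i 1) = Pi.single i 1) →
    ∃ γ : ℝ → Matrix (Fin p) (Fin p) ℝ,
      (∀ i j, ContDiff ℝ (⊤ : ℕ∞) fun t => γ t i j) ∧ γ 0 = 1 ∧ γ 1 = A ∧
      ∀ t, γ t ∈ SOset p := by
  intro m
  induction m with
  | zero =>
    intro k hpk A hA hfix
    have : A = 1 := by
      ext i j
      have := congrFun (hfix j (by omega)) i
      rw [mulVec_single_one] at this
      simp only [col_apply] at this
      rw [this, Pi.single_apply, Matrix.one_apply]
    refine ⟨fun _ => 1, fun i j => contDiff_const, rfl, this.symm, fun t => ⟨by simp, by simp⟩⟩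
  | succ m ih =>
    intro k hpk A hA hfix
    by_cases hkp : p ≤ k + m
    · exact ih k hkp A hA hfix
    have hk : k < p := by omega
    set u : E p := Pi.single (⟨k, hk⟩ : Fin p) 1 with hu_def
    set w : E p := A.mulVec u with hw_def
    have hw1 : w ⬝ᵥ w = 1 := by
      rw [hw_def, mulVec_dot hA.1, hu_def]
      simp [single_dotProduct, Pi.single_apply]
    have hwi : ∀ i : Fin p, (i : ℕ) < k → w i = 0 := by
      intro i hi
      have h1 : w ⬝ᵥ (Pi.single i 1 : E p) = 0 := by
        rw [hw_def, ← hfix i hi, mulVec_dot hA.1, hu_def, single_dotProduct, one_mul,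
          Pi.single_apply]
        simp only [ite_eq_right_iff]
        intro h; rw [← h] at hi; simp only [Fin.val_mk] at hi; omega
      rwa [dotProduct_single, mul_one] at h1
    have hneg : w = -u → k + 1 < p := by
      intro hwneg
      by_contra hcon
      have hkp1 : k + 1 = p := by omega
      -- then A is diagonal with a single -1, det = -1, contradiction
      have hAdiag : A = Matrix.diagonal (fun i : Fin p => if i = ⟨k, hk⟩ then (-1 : ℝ) else 1) := by
        ext i j
        have hcol : A.mulVec (Pi.single j 1) = if j = ⟨k, hk⟩ then -u else Pi.single j 1 := by
          by_cases hj : j = (⟨k, hk⟩ : Fin p)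
          · rw [if_pos hj, hj, ← hu_def, ← hw_def, hwneg]
          · rw [if_neg hj]
            refine hfix j ?_
            have h1 : (j : ℕ) ≠ k := fun h => hj (Fin.ext h)
            have := j.isLt; omega
        have h2 := congrFun hcol i
        simp only [mulVec_single_one, col_apply] at h2
        rw [h2]
        by_cases hj : j = (⟨k, hk⟩ : Fin p)
        · subst hj
          rw [if_pos rfl, hu_def]
          by_cases hij : i = (⟨k, hk⟩ : Fin p)
          · rw [hij]; simp [Matrix.diagonal_apply, Pi.single_apply]
          · have h3 : (⟨k, hk⟩ : Fin p) ≠ i := Ne.symm hij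
            simp [Matrix.diagonal_apply, Pi.single_apply, hij, h3]
        · rw [if_neg hj]
          by_cases hij : i = j
          · subst hij; simp [Matrix.diagonal_apply, Pi.single_apply, hj]
          · have h3 : j ≠ i := Ne.symm hij
            simp [Matrix.diagonal_apply, Pi.single_apply, hij, h3]
      have hdet : A.det = -1 := by
        rw [hAdiag, det_diagonal]
        rw [Finset.prod_eq_single (⟨k, hk⟩ : Fin p) (fun b _ hb => if_neg hb)
          (fun h => absurd (Finset.mem_univ _) h)]
        rw [if_pos rfl]
      rw [hA.2] at hdet; norm_num at hdet
    obtain ⟨γR, hγRsm, hγR0, hγRSO, hγR1, hγRfix⟩ := reach hk w hw1 hwi hneg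
    have hRSO := hγRSO 1
    have hRR : γR 1 * (γR 1)ᵀ = 1 := mul_eq_one_comm.mp hRSO.1
    have hB_def : (γR 1)ᵀ * A = (γR 1)ᵀ * A := rfl
    have hBSO : (γR 1)ᵀ * A ∈ SOset p := by
      constructor
      · rw [transpose_mul, transpose_transpose, mul_assoc, ← mul_assoc (γR 1), hRR, one_mul,
          hA.1]
      · rw [det_mul, det_transpose, hRSO.2, hA.2, one_mul]
    have hBfix : ∀ i : Fin p, (i : ℕ) < k + 1 →
        ((γR 1)ᵀ * A).mulVec (Pi.single i 1) = Pi.single i 1 := by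
      intro i hi
      rw [← mulVec_mulVec]
      by_cases hik : (i : ℕ) < k
      · rw [hfix i hik]
        conv_lhs => rw [← hγRfix 1 i hik]
        rw [mulVec_mulVec, hRSO.1, one_mulVec]
      · have hieq : i = (⟨k, hk⟩ : Fin p) := Fin.ext (by simp only [Fin.val_mk]; omega)
        rw [hieq, ← hu_def, ← hw_def, ← hγR1, mulVec_mulVec, hRSO.1, one_mulVec, hu_def]
    obtain ⟨γB, hγBsm, hγB0, hγB1, hγBSO⟩ := ih (k + 1) (by omega) ((γR 1)ᵀ * A) hBSO hBfix
    refine ⟨fun t => γR t * γB t, ?_, ?_, ?_, fun t => SOset_mul (hγRSO t) (hγBSO t)⟩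
    · intro i j
      have : (fun t => (γR t * γB t) i j) = fun t => ∑ l, γR t i l * γB t l j := by
        funext t; rw [Matrix.mul_apply]
      rw [this]
      exact ContDiff.sum fun l _ => (hγRsm i l).mul (hγBsm l j)
    · show γR 0 * γB 0 = 1
      rw [hγR0, hγB0, one_mul]
    · show γR 1 * γB 1 = A
      rw [hγB1, ← mul_assoc, hRR, one_mul]


section Rigid
variable {p : ℕ} {ψ : E p → E p}

lemma rigidity (hψ : ContDiff ℝ (⊤ : ℕ∞) ψ)
    (h : ∀ᶠ y in 𝓝 (0 : E p), (jac ψ y)ᵀ * jac ψ y = 1) :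
    ∀ᶠ y in 𝓝 (0 : E p), ψ y = ψ 0 + (jac ψ 0).mulVec y := by
  obtain ⟨r, hr, hball⟩ := Metric.eventually_nhds_iff_ball.1 h
  set D : E p → (E p →L[ℝ] E p) := fderiv ℝ ψ with hD_def
  have hD : ∀ y, HasFDerivAt ψ (D y) y := fun y =>
    (hψ.differentiable (by simp) y).hasFDerivAt
  have hDc : ContDiff ℝ (⊤ : ℕ∞) D := hψ.fderiv_right (by exact_mod_cast le_top)
  set H : E p → (E p →L[ℝ] E p →L[ℝ] E p) := fderiv ℝ D with hH_def
  have hH : ∀ y, HasFDerivAt D (H y) y := fun y =>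
    (hDc.differentiable (by simp) y).hasFDerivAt
  have hsymm : ∀ y v w, H y v w = H y w v := fun y v w =>
    second_derivative_symmetric hD (hH y) v w
  -- single basis vector notation
  set e : Fin p → E p := fun i => Pi.single i 1 with he_def
  -- derivative of z ↦ D z u
  have happ : ∀ (u : E p) (y : E p), HasFDerivAt (fun z => D z u) ((H y).flip u) y := by
    intro u y
    have := (hH y).clm_apply (hasFDerivAt_const u y)
    simpa using this
  -- scalar components
  have happi : ∀ (u : E p) (i : Fin p) (y : E p),
      HasFDerivAt (fun z => D z u i)
        ((ContinuousLinearMap.proj i).comp ((H y).flip u)) y := by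
    intro u i y
    exact ((ContinuousLinearMap.proj (R := ℝ) (φ := fun _ : Fin p => ℝ)
      i).hasFDerivAt).comp y (happ u y)
  -- Step 1+2+3+4 : second derivative vanishes on the ball
  have Hzero : ∀ y ∈ Metric.ball (0 : E p) r, H y = 0 := by
    intro y hy
    -- antisymmetry relation
    have step1 : ∀ a b c : Fin p,
        (H y (e c) (e a)) ⬝ᵥ (D y (e b)) + (H y (e c) (e b)) ⬝ᵥ (D y (e a)) = 0 := by
      intro a b c
      have hsum : HasFDerivAt
          (fun z => ∑ i, D z (e a) i * D z (e b) i)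
          (∑ i, ((D y (e a) i) • ((ContinuousLinearMap.proj i).comp ((H y).flip (e b)))
            + (D y (e b) i) • ((ContinuousLinearMap.proj i).comp ((H y).flip (e a))))) y :=
        HasFDerivAt.fun_sum fun i _ => (happi (e a) i y).mul (happi (e b) i y)
      have heq : (fun z => ∑ i, D z (e a) i * D z (e b) i)
          =ᶠ[𝓝 y] fun _ => (1 : Matrix (Fin p) (Fin p) ℝ) a b := by
        filter_upwards [Metric.isOpen_ball.mem_nhds hy] with z hz
        have h1 := hball z hz
        have h2 := congrFun (congrFun h1 a) b
        rw [Matrix.mul_apply] at h2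
        rw [← h2]
        congr 1
      have hzero : HasFDerivAt
          (fun z => ∑ i, D z (e a) i * D z (e b) i) 0 y :=
        (heq.hasFDerivAt_iff (f' := (0 : E p →L[ℝ] ℝ))).mpr (hasFDerivAt_const _ y)
      have hL := hsum.unique hzero
      have := congrFun (congrArg (fun (L : E p →L[ℝ] ℝ) => (L : E p → ℝ)) hL) (e c)
      simp only [ContinuousLinearMap.coe_sum', Finset.sum_apply,
        ContinuousLinearMap.add_apply, ContinuousLinearMap.smul_apply,
        ContinuousLinearMap.comp_apply, ContinuousLinearMap.flip_apply,
        ContinuousLinearMap.proj_apply, ContinuousLinearMap.zero_apply,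
        smul_eq_mul] at this
      rw [dotProduct_comm (H y (e c) (e a)), dotProduct_comm (H y (e c) (e b))]
      simp only [dotProduct]
      rw [← Finset.sum_add_distrib, ← this]
      apply Finset.sum_congr rfl; intro i _; ring
    -- S antisymmetric in last two, symmetric in first two ⇒ zero
    have hS0 : ∀ a b c : Fin p, (H y (e c) (e a)) ⬝ᵥ (D y (e b)) = 0 := by
      intro a b c
      have h1 := step1 a b c
      have h2 := step1 c b a
      have h3 := step1 a c b
      have e1 : ∀ x z w : Fin p, H y (e x) (e z) ⬝ᵥ D y (e w) = H y (e z) (e x) ⬝ᵥ D y (e w) :=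
        fun x z w => by rw [hsymm y (e x) (e z)]
      linarith [h1, h2, h3, e1 c a b, e1 c b a, e1 a b c, e1 b a c, e1 b c a, e1 a c b]
    -- Step 4: each H y (e c) (e a) vanishes
    have hvec : ∀ a c : Fin p, H y (e c) (e a) = 0 := by
      intro a c
      set hv : E p := H y (e c) (e a) with hhv
      have hJ := hball y hy
      have hJv : (jac ψ y)ᵀ.mulVec hv = 0 := by
        ext b
        have : (jac ψ y)ᵀ.mulVec hv b = D y (e b) ⬝ᵥ hv := by
          simp only [Matrix.mulVec, dotProduct, transpose_apply, jac, Matrix.of_apply]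
          rfl
        rw [this, dotProduct_comm, hhv]
        simpa using hS0 a b c
      have hJJ : jac ψ y * (jac ψ y)ᵀ = 1 := mul_eq_one_comm.mp hJ
      have : hv = (jac ψ y * (jac ψ y)ᵀ).mulVec hv := by rw [hJJ, one_mulVec]
      rw [this, ← mulVec_mulVec, hJv, mulVec_zero]
    -- Step 5: H y = 0 as a continuous bilinear map
    apply ContinuousLinearMap.ext; intro v
    apply ContinuousLinearMap.ext; intro w
    have hv' : H y v w = ∑ c, v c • (H y (e c) w) := by
      conv_lhs => rw [← basis_sum v]
      rw [map_sum]
      simp [ContinuousLinearMap.sum_apply]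
      rfl
    rw [hv']
    have : ∀ c, H y (e c) w = 0 := by
      intro c
      have : H y (e c) w = ∑ a, w a • (H y (e c) (e a)) := by
        conv_lhs => rw [← basis_sum w]
        rw [map_sum]
        simp
        rfl
      rw [this]
      simp [hvec]
    simp [this]
  -- Step 6: D is constant on the ball
  have hDconst : ∀ z ∈ Metric.ball (0 : E p) r, D z = D 0 := by
    intro z hz
    have h0mem : (0 : E p) ∈ Metric.ball (0 : E p) r := Metric.mem_ball_self hr
    have hb := Convex.norm_image_sub_le_of_norm_fderiv_le
      (f := D) (C := 0) (s := Metric.ball (0 : E p) r)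
      (fun x _ => (hDc.differentiable (by simp) x))
      (fun x hx => by rw [← hH_def, Hzero x hx, norm_zero])
      (convex_ball 0 r) h0mem hz
    rw [zero_mul] at hb
    have := norm_le_zero_iff.mp hb
    rwa [sub_eq_zero] at this
  -- Step 7: ψ is affine on the ball
  have haff : ∀ z ∈ Metric.ball (0 : E p) r, ψ z = ψ 0 + D 0 z := by
    intro z hz
    have h0mem : (0 : E p) ∈ Metric.ball (0 : E p) r := Metric.mem_ball_self hr
    set χ : E p → E p := fun z => ψ z - D 0 z with hχ_def
    have hχd : ∀ x, HasFDerivAt χ (D x - D 0) x := fun x =>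
      (hD x).sub ((D 0).hasFDerivAt)
    have hb := Convex.norm_image_sub_le_of_norm_fderiv_le
      (f := χ) (C := 0) (s := Metric.ball (0 : E p) r)
      (fun x _ => (hχd x).differentiableAt)
      (fun x hx => by rw [(hχd x).fderiv, hDconst x hx, sub_self, norm_zero])
      (convex_ball 0 r) h0mem hz
    rw [zero_mul] at hb
    have h2 := norm_le_zero_iff.mp hb
    rw [sub_eq_zero] at h2
    have h3 : ψ z - D 0 z = ψ 0 - D 0 0 := h2
    rw [map_zero, sub_zero] at h3
    exact sub_eq_iff_eq_add.mp h3
  -- Step 8: D 0 agrees with jac ψ 0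
  have hjac : ∀ z : E p, (jac ψ 0).mulVec z = D 0 z := by
    intro z
    ext i
    have : D 0 z = ∑ j, z j • D 0 (e j) := by
      conv_lhs => rw [← basis_sum z]
      rw [map_sum]
      simp
      rfl
    rw [this]
    simp only [Matrix.mulVec, dotProduct, jac, Matrix.of_apply, Finset.sum_apply,
      Pi.smul_apply, smul_eq_mul]
    apply Finset.sum_congr rfl; intro j _
    rw [mul_comm]
  filter_upwards [Metric.ball_mem_nhds (0 : E p) hr] with z hz
  rw [haff z hz, hjac z]
end Rigid

/-- For smooth map germs `f, g : (ℝ^n,0) → (ℝ^p,0)`: `f` and `g` are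
`𝓐_0[SO(p)]`-equivalent if and only if they are congruent, i.e. `𝓡×SO(p)`-equivalent. -/
theorem stmt_11 (n p : ℕ) (f g : E n → E p)
    (hf : ContDiff ℝ (⊤ : ℕ∞) f) (hg : ContDiff ℝ (⊤ : ℕ∞) g)
    (hf0 : f 0 = 0) (hg0 : g 0 = 0) :
    (∃ φ : E n → E n, SourceDiffeo n φ ∧
      ∃ ψ : E p → E p, Diff0G p (SOset p) ψ ∧
        ∀ᶠ x in 𝓝 (0 : E n), f (φ x) = ψ (g x))
    ↔ (∃ φ : E n → E n, SourceDiffeo n φ ∧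
        ∃ A ∈ SOset p, ∀ᶠ x in 𝓝 (0 : E n), f (φ x) = A.mulVec (g x)) := by
  constructor
  · rintro ⟨φ, hφ, ψ, ⟨⟨hψsm, hψ0, hψjac⟩, -⟩, heq⟩
    have hjSO : ∀ᶠ y in 𝓝 (0 : E p), (jac ψ y)ᵀ * jac ψ y = 1 := hψjac.mono fun y hy => hy.1
    have hrig := rigidity hψsm hjSO
    have hA : jac ψ 0 ∈ SOset p := hψjac.self_of_nhds
    refine ⟨φ, hφ, jac ψ 0, hA, ?_⟩
    have hgt : Filter.Tendsto g (𝓝 (0 : E n)) (𝓝 (0 : E p)) := by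
      have := (hg.continuous).continuousAt (x := (0 : E n))
      rwa [ContinuousAt, hg0] at this
    have hev : ∀ᶠ x in 𝓝 (0 : E n), ψ (g x) = ψ 0 + (jac ψ 0).mulVec (g x) :=
      hgt.eventually hrig
    filter_upwards [heq, hev] with x h1 h2
    rw [h1, h2, hψ0, zero_add]
  · rintro ⟨φ, hφ, A, hA, heq⟩
    obtain ⟨γ, hγsm, hγ0, hγ1, hγSO⟩ := so_path_aux p p 0 (by omega) A hA
      (fun i hi => absurd hi (Nat.not_lt_zero _))
    refine ⟨φ, hφ, fun y => A.mulVec y, ⟨⟨contDiff_mulVec A, by simp, ?_⟩, ?_⟩, ?_⟩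
    · exact Filter.Eventually.of_forall fun y => by rw [jac_mulVec]; exact hA
    · refine ⟨fun q => (γ q.1).mulVec q.2, ?_, ?_, ?_, ?_⟩
      · apply contDiff_pi.2
        intro i
        have hform : (fun q : ℝ × E p => (γ q.1).mulVec q.2 i)
            = fun q : ℝ × E p => ∑ j, γ q.1 i j * q.2 j := by
          funext q
          simp [Matrix.mulVec, dotProduct]
        rw [hform]
        exact ContDiff.sum fun j _ =>
          ((hγsm i j).comp contDiff_fst).mul ((contDiff_pi.1 contDiff_id j).comp contDiff_snd)
      · intro t _
        refine ⟨contDiff_mulVec (γ t), by simp, ?_⟩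
        exact Filter.Eventually.of_forall fun y => by
          rw [show jac (fun y => ((γ (t, y).1).mulVec (t, y).2 : E p)) y
            = jac (fun y : E p => (γ t).mulVec y) y from rfl, jac_mulVec]
          exact hγSO t
      · exact Filter.Eventually.of_forall fun y => by
          show (γ 0).mulVec y = y
          rw [hγ0, one_mulVec]
      · exact Filter.Eventually.of_forall fun y => by
          show (γ 1).mulVec y = A.mulVec y
          rw [hγ1]
    · exact heq
end Givens
end
end

section
/- Suppose a map germ f = (f_1,f_2):(ℝ,0)→(ℝ²,0) has type A_k, i.e., one of f_1, f_2 has type A_k and the other has type A_{≥k}. Then there exists a function germ h:(ℝ,0)→ℝ such that f is A_0[SO(2)]-equivalent to the germ x ↦ (± x^{k+1}, x^{k+1} h(x)), where the sign is + or − according as the nonvanishing (k+1)-st derivative at 0 is positive or negative. -/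
open Filter Topology Matrix

noncomputable section

/-- A function germ `g : (ℝ,0) → (ℝ,0)` has type `A_k` if
`g'(0) = … = g^{(k)}(0) = 0` and `g^{(k+1)}(0) ≠ 0`. -/
def TypeAk (k : ℕ) (g : ℝ → ℝ) : Prop :=
  (∀ m : ℕ, 1 ≤ m → m ≤ k → iteratedDeriv m g 0 = 0) ∧ iteratedDeriv (k + 1) g 0 ≠ 0

/-- A function germ has type `A_{≥k}` if `g'(0) = … = g^{(k)}(0) = 0`. -/
def TypeAgek (k : ℕ) (g : ℝ → ℝ) : Prop :=
  ∀ m : ℕ, 1 ≤ m → m ≤ k → iteratedDeriv m g 0 = 0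

/-- A germ of diffeomorphism `φ : (ℝ,0) → (ℝ,0)`. -/
def LineDiffeo (φ : ℝ → ℝ) : Prop :=
  ContDiff ℝ (⊤ : ℕ∞) φ ∧ φ 0 = 0 ∧ deriv φ 0 ≠ 0

/-- `𝓐_0[SO(2)]`-equivalence of plane curve germs `(ℝ,0) → (ℝ²,0)`. -/
def A0SO2curve (f g : ℝ → E 2) : Prop :=
  ∃ φ : ℝ → ℝ, LineDiffeo φ ∧ ∃ ψ : E 2 → E 2, Diff0G 2 (SOset 2) ψ ∧
    ∀ᶠ x in 𝓝 (0 : ℝ), f (φ x) = ψ (g x)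

section Aux
open intervalIntegral MeasureTheory

lemma one_le_inf : (1 : WithTop ℕ∞) ≤ ((⊤:ℕ∞) : WithTop ℕ∞) := by exact_mod_cast le_top

/-- aux -/
def Iq (n : ℕ) (G : ℝ → ℝ) (x : ℝ) : ℝ := ∫ t in (0:ℝ)..1, t ^ n * G (x * t)

lemma Iq_hasDerivAt (n : ℕ) {G : ℝ → ℝ} (hG : ContDiff ℝ (⊤ : ℕ∞) G) (x₀ : ℝ) :
    HasDerivAt (Iq n G) (Iq (n + 1) (deriv G) x₀) x₀ := by
  have hGc : Continuous G := hG.continuous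
  have hG'c : Continuous (deriv G) := hG.continuous_deriv one_le_inf
  -- bound for the derivative on a ball
  obtain ⟨C, hC⟩ : ∃ C, ∀ y ∈ Set.Icc (-(|x₀| + 1)) (|x₀| + 1), ‖deriv G y‖ ≤ C :=
    isCompact_Icc.exists_bound_of_continuousOn hG'c.continuousOn
  have key := intervalIntegral.hasDerivAt_integral_of_dominated_loc_of_deriv_le
    (μ := volume) (a := (0:ℝ)) (b := 1) (x₀ := x₀)
    (F := fun x t => t ^ n * G (x * t))
    (F' := fun x t => t ^ (n + 1) * deriv G (x * t))
    (bound := fun _ => C) (Metric.ball_mem_nhds x₀ one_pos)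
    (Eventually.of_forall fun x =>
      ((continuous_pow n).mul (hGc.comp (continuous_const.mul continuous_id))).aestronglyMeasurable)
    (((continuous_pow n).mul (hGc.comp (continuous_const.mul continuous_id))).intervalIntegrable 0 1)
    (((continuous_pow (n+1)).mul (hG'c.comp (continuous_const.mul continuous_id))).aestronglyMeasurable)
    ?_ (intervalIntegrable_const) ?_
  · exact key.2
  · refine Eventually.of_forall fun t ht x hx => ?_
    rw [Set.uIoc_of_le (by norm_num : (0:ℝ) ≤ 1)] at ht
    have ht0 : 0 < t := ht.1
    have ht1 : t ≤ 1 := ht.2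
    have hxt : x * t ∈ Set.Icc (-(|x₀| + 1)) (|x₀| + 1) := by
      have hx' : |x| ≤ |x₀| + 1 := by
        have := mem_ball_iff_norm.mp hx
        have : |x - x₀| < 1 := this
        have h2 := abs_sub_abs_le_abs_sub x x₀
        linarith
      constructor
      · nlinarith [neg_abs_le (x * t), abs_mul x t, abs_nonneg x, abs_of_pos ht0,
          abs_nonneg (x*t), le_abs_self (x*t)]
      · nlinarith [le_abs_self (x * t), abs_mul x t, abs_nonneg x, abs_of_pos ht0]
    have hb := hC _ hxt
    have : ‖t ^ (n+1) * deriv G (x * t)‖ = |t| ^ (n+1) * ‖deriv G (x*t)‖ := by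
      rw [norm_mul]; simp [abs_pow]
    rw [this, abs_of_pos ht0]
    have htp : t ^ (n+1) ≤ 1 := pow_le_one₀ ht0.le ht1
    have h0 : (0:ℝ) ≤ ‖deriv G (x*t)‖ := norm_nonneg _
    calc t ^ (n+1) * ‖deriv G (x*t)‖ ≤ 1 * ‖deriv G (x*t)‖ := by
          exact mul_le_mul_of_nonneg_right htp h0
      _ = ‖deriv G (x*t)‖ := one_mul _
      _ ≤ C := hb
  · refine Eventually.of_forall fun t ht x hx => ?_
    have hGd : HasDerivAt G (deriv G (x * t)) (x * t) :=
      ((hG.differentiable (by simp)) (x*t)).hasDerivAt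
    have h1 : HasDerivAt (fun x : ℝ => x * t) t x := by
      simpa using (hasDerivAt_id x).mul_const t
    have := (hGd.comp x h1).const_mul (t ^ n)
    rw [show t ^ (n + 1) * deriv G (x * t) = t ^ n * (deriv G (x * t) * t) by ring]
    exact this

lemma ContDiff.deriv_inf {G : ℝ → ℝ} (hG : ContDiff ℝ (⊤ : ℕ∞) G) :
    ContDiff ℝ (⊤ : ℕ∞) (deriv G) :=
  (contDiff_infty_iff_deriv.mp hG).2

lemma Iq_contDiff_nat (m : ℕ) : ∀ (n : ℕ) (G : ℝ → ℝ), ContDiff ℝ (⊤ : ℕ∞) G →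
    ContDiff ℝ (m : ℕ∞) (Iq n G) := by
  induction m with
  | zero =>
    intro n G hG
    have : Continuous (Iq n G) := continuous_iff_continuousAt.2
      fun x => (Iq_hasDerivAt n hG x).differentiableAt.continuousAt
    exact_mod_cast contDiff_zero.2 this
  | succ m ih =>
    intro n G hG
    have hd : deriv (Iq n G) = Iq (n + 1) (deriv G) :=
      funext fun x => (Iq_hasDerivAt n hG x).deriv
    have h1 : ContDiff ℝ ((m : WithTop ℕ∞) + 1) (Iq n G) := by
      refine contDiff_succ_iff_deriv.2 ⟨fun x => (Iq_hasDerivAt n hG x).differentiableAt, ?_, ?_⟩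
      · intro h; exact absurd h (by simp)
      · rw [hd]; exact_mod_cast ih (n+1) (deriv G) hG.deriv_inf
    exact_mod_cast h1

lemma Iq_contDiff (n : ℕ) {G : ℝ → ℝ} (hG : ContDiff ℝ (⊤ : ℕ∞) G) :
    ContDiff ℝ (⊤ : ℕ∞) (Iq n G) := by
  exact contDiff_infty.2 fun m => Iq_contDiff_nat m n G hG

lemma Iq_iteratedDeriv (m : ℕ) : ∀ (n : ℕ) (G : ℝ → ℝ), ContDiff ℝ (⊤ : ℕ∞) G →
    iteratedDeriv m (Iq n G) = Iq (n + m) (iteratedDeriv m G) := by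
  induction m with
  | zero => intro n G _; simp [iteratedDeriv_zero]
  | succ m ih =>
    intro n G hG
    rw [iteratedDeriv_succ', show deriv (Iq n G) = Iq (n + 1) (deriv G) from
      funext fun x => (Iq_hasDerivAt n hG x).deriv, ih (n+1) (deriv G) hG.deriv_inf,
      show n + (m + 1) = n + 1 + m by omega, iteratedDeriv_succ']

lemma Iq_zero (n : ℕ) (G : ℝ → ℝ) : Iq n G 0 = G 0 / (n + 1) := by
  unfold Iq
  simp only [zero_mul]
  rw [intervalIntegral.integral_mul_const, integral_pow]
  field_simp
  simp

lemma Iq_ftc {G : ℝ → ℝ} (hG : ContDiff ℝ (⊤ : ℕ∞) G) (x : ℝ) :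
    x * Iq 0 (deriv G) x = G x - G 0 := by
  have h1 : ∀ t ∈ Set.uIcc (0:ℝ) 1, HasDerivAt (fun t => G (x * t)) (x * deriv G (x * t)) t := by
    intro t _
    have hGd : HasDerivAt G (deriv G (x * t)) (x * t) :=
      ((hG.differentiable (by simp)) (x*t)).hasDerivAt
    have h1 : HasDerivAt (fun s : ℝ => x * s) x t := by
      simpa using (hasDerivAt_id t).const_mul x
    have := hGd.comp t h1
    rw [mul_comm x (deriv G (x * t))]; exact this
  have hint : IntervalIntegrable (fun t => x * deriv G (x * t)) volume 0 1 :=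
    (continuous_const.mul ((hG.continuous_deriv one_le_inf).comp
      (continuous_const.mul continuous_id))).intervalIntegrable 0 1
  have h2 := intervalIntegral.integral_eq_sub_of_hasDerivAt h1 hint
  simp only [mul_one, mul_zero] at h2
  unfold Iq
  simp only [pow_zero, one_mul]
  rw [← intervalIntegral.integral_const_mul] at *
  rw [h2]

/-- Single Hadamard step. -/
lemma hadamard_step {G : ℝ → ℝ} (hG : ContDiff ℝ (⊤ : ℕ∞) G) :
    ∃ a : ℝ → ℝ, ContDiff ℝ (⊤ : ℕ∞) a ∧ (∀ x, G x = G 0 + x * a x) ∧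
      ∀ m : ℕ, iteratedDeriv m a 0 = iteratedDeriv (m + 1) G 0 / (m + 1) := by
  refine ⟨Iq 0 (deriv G), Iq_contDiff 0 hG.deriv_inf, fun x => by
    have := Iq_ftc hG x; linarith, fun m => ?_⟩
  rw [Iq_iteratedDeriv m 0 (deriv G) hG.deriv_inf]
  rw [show iteratedDeriv m (deriv G) = iteratedDeriv (m+1) G from iteratedDeriv_succ'.symm]
  rw [show (0 + m) = m by omega]
  have := Iq_zero m (iteratedDeriv (m+1) G)
  simpa using this

/-- Full Hadamard lemma with vanishing derivatives. -/
lemma hadamard (k : ℕ) : ∀ (G : ℝ → ℝ), ContDiff ℝ (⊤ : ℕ∞) G →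
    (∀ m : ℕ, m ≤ k → iteratedDeriv m G 0 = 0) →
    ∃ a : ℝ → ℝ, ContDiff ℝ (⊤ : ℕ∞) a ∧ (∀ x, G x = x ^ (k+1) * a x) ∧
      ∃ c : ℝ, 0 < c ∧ a 0 = c * iteratedDeriv (k+1) G 0 := by
  induction k with
  | zero =>
    intro G hG hvan
    obtain ⟨a, ha, hrep, hd⟩ := hadamard_step hG
    have h0 : G 0 = 0 := by simpa using hvan 0 le_rfl
    refine ⟨a, ha, fun x => by rw [hrep x, h0]; ring, 1, one_pos, ?_⟩
    have := hd 0
    simpa using this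
  | succ k ih =>
    intro G hG hvan
    obtain ⟨a₁, ha₁, hrep, hd⟩ := hadamard_step hG
    have h0 : G 0 = 0 := by simpa using hvan 0 (by omega)
    have hvan₁ : ∀ m : ℕ, m ≤ k → iteratedDeriv m a₁ 0 = 0 := by
      intro m hm
      rw [hd m, hvan (m+1) (by omega)]
      simp
    obtain ⟨a, ha, hrep₂, c, hc, hval⟩ := ih a₁ ha₁ hvan₁
    refine ⟨a, ha, fun x => by rw [hrep x, h0, hrep₂ x]; ring, c / (k + 2), by positivity, ?_⟩
    rw [hval, hd (k+1)]
    push_cast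
    ring







def rotF (θ : ℝ) : E 2 → E 2 :=
  fun y => ![Real.cos θ * y 0 - Real.sin θ * y 1, Real.sin θ * y 0 + Real.cos θ * y 1]

def rotM (θ : ℝ) : Matrix (Fin 2) (Fin 2) ℝ :=
  ![![Real.cos θ, -Real.sin θ], ![Real.sin θ, Real.cos θ]]

lemma rotF_eq_mulVec (θ : ℝ) (y : E 2) : rotF θ y = (rotM θ).mulVec y := by
  funext i
  fin_cases i <;>
    simp [rotF, rotM, Matrix.mulVec, dotProduct, Fin.sum_univ_two] <;> ring

lemma rotF_contDiff (θ : ℝ) : ContDiff ℝ (⊤ : ℕ∞) (rotF θ) := by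
  have : rotF θ = ⇑((rotM θ).mulVecLin.toContinuousLinearMap) := by
    funext y; rw [rotF_eq_mulVec]; rfl
  rw [this]
  exact (Matrix.mulVecLin (rotM θ)).toContinuousLinearMap.contDiff

lemma rotF_jac (θ : ℝ) (y : E 2) : jac (rotF θ) y = rotM θ := by
  have hL : HasFDerivAt (rotF θ) ((rotM θ).mulVecLin.toContinuousLinearMap) y := by
    have : rotF θ = ⇑((rotM θ).mulVecLin.toContinuousLinearMap) := by
      funext y; rw [rotF_eq_mulVec]; rfl
    rw [this]
    exact (Matrix.mulVecLin (rotM θ)).toContinuousLinearMap.hasFDerivAt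
  funext i j
  show fderiv ℝ (rotF θ) y (Pi.single j 1) i = rotM θ i j
  rw [hL.fderiv]
  show (rotM θ).mulVec (Pi.single j 1) i = rotM θ i j
  simp [Matrix.mulVec, dotProduct, Pi.single_apply, mul_ite, Finset.sum_ite_eq']

lemma rotM_SO (θ : ℝ) : rotM θ ∈ SOset 2 := by
  constructor
  · ext i j
    fin_cases i <;> fin_cases j <;>
      simp [Matrix.mul_apply, Fin.sum_univ_two, Matrix.one_apply] <;> simp [rotM] <;>
      nlinarith [Real.sin_sq_add_cos_sq θ]
  · rw [show rotM θ = Matrix.of ![![Real.cos θ, -Real.sin θ], ![Real.sin θ, Real.cos θ]] from rfl,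
      Matrix.det_fin_two_of]
    nlinarith [Real.sin_sq_add_cos_sq θ]

lemma rotF_diffG (θ : ℝ) : DiffG 2 (SOset 2) (rotF θ) := by
  refine ⟨rotF_contDiff θ, ?_, Eventually.of_forall fun y => by rw [rotF_jac]; exact rotM_SO θ⟩
  funext i
  fin_cases i <;> simp [rotF]

lemma rotF_diff0G (θ : ℝ) : Diff0G 2 (SOset 2) (rotF θ) := by
  refine ⟨rotF_diffG θ, fun p => rotF (p.1 * θ) p.2, ?_, fun t _ => rotF_diffG (t * θ), ?_, ?_⟩
  · have hcos : ContDiff ℝ (⊤ : ℕ∞) (fun p : ℝ × E 2 => Real.cos (p.1 * θ)) :=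
      Real.contDiff_cos.comp (contDiff_fst.mul contDiff_const)
    have hsin : ContDiff ℝ (⊤ : ℕ∞) (fun p : ℝ × E 2 => Real.sin (p.1 * θ)) :=
      Real.contDiff_sin.comp (contDiff_fst.mul contDiff_const)
    have hy : ∀ i : Fin 2, ContDiff ℝ (⊤ : ℕ∞) (fun p : ℝ × E 2 => p.2 i) :=
      fun i => (contDiff_apply (𝕜 := ℝ) (E := ℝ) i).comp contDiff_snd
    refine contDiff_pi.2 fun i => ?_
    fin_cases i
    · simpa [rotF] using (hcos.mul (hy 0)).sub (hsin.mul (hy 1))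
    · simpa [rotF] using (hsin.mul (hy 0)).add (hcos.mul (hy 1))
  · refine Eventually.of_forall fun y => ?_
    funext i
    fin_cases i <;> simp [rotF]
  · refine Eventually.of_forall fun y => ?_
    simp




/-- Main analytic construction. -/
lemma main_case (k : ℕ) (f : ℝ → E 2) (hf : ContDiff ℝ (⊤ : ℕ∞) f) (hf0 : f 0 = 0)
    (h1 : TypeAk k (fun t => f t 0)) (h2 : TypeAgek k (fun t => f t 1)) :
    ∃ (h : ℝ → ℝ) (ε : ℝ) (φ : ℝ → ℝ), ContDiff ℝ (⊤ : ℕ∞) h ∧ (ε = 1 ∨ ε = -1) ∧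
      LineDiffeo φ ∧ ∀ᶠ x in 𝓝 (0 : ℝ),
        (f (φ x) 0 = ε * x ^ (k + 1) ∧ f (φ x) 1 = x ^ (k + 1) * h x) := by
  have hf1 : ContDiff ℝ (⊤:ℕ∞) (fun t => f t 0) := (contDiff_apply (𝕜:=ℝ) (E:=ℝ) 0).comp hf
  have hf2 : ContDiff ℝ (⊤:ℕ∞) (fun t => f t 1) := (contDiff_apply (𝕜:=ℝ) (E:=ℝ) 1).comp hf
  have hvan1 : ∀ m : ℕ, m ≤ k → iteratedDeriv m (fun t => f t 0) 0 = 0 := by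
    intro m hm
    rcases Nat.eq_zero_or_pos m with h | h
    · subst h; simpa [iteratedDeriv_zero] using congrFun hf0 0
    · exact h1.1 m h hm
  have hvan2 : ∀ m : ℕ, m ≤ k → iteratedDeriv m (fun t => f t 1) 0 = 0 := by
    intro m hm
    rcases Nat.eq_zero_or_pos m with h | h
    · subst h; simpa [iteratedDeriv_zero] using congrFun hf0 1
    · exact h2 m h hm
  obtain ⟨a, ha, hfa, c, hc, ha0eq⟩ := hadamard k _ hf1 hvan1
  obtain ⟨b, hb, hfb, -⟩ := hadamard k _ hf2 hvan2
  have hfa' : ∀ x : ℝ, f x 0 = x ^ (k+1) * a x := hfa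
  have hfb' : ∀ x : ℝ, f x 1 = x ^ (k+1) * b x := hfb
  have ha0 : a 0 ≠ 0 := by rw [ha0eq]; exact mul_ne_zero (ne_of_gt hc) h1.2
  set ε : ℝ := if 0 < a 0 then 1 else -1 with hεdef
  have hεor : ε = 1 ∨ ε = -1 := by by_cases h : 0 < a 0 <;> simp [hεdef, h]
  have hε2 : ε * ε = 1 := by rcases hεor with h | h <;> rw [h] <;> norm_num
  have hεa : 0 < ε * a 0 := by
    by_cases h : 0 < a 0
    · simpa [hεdef, h] using h
    · have hlt : a 0 < 0 := lt_of_le_of_ne (not_lt.1 h) ha0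
      simp only [hεdef, if_neg h]
      nlinarith
  set r : ℝ → ℝ := fun t => (ε * a t) ^ (((k+1 : ℕ) : ℝ))⁻¹ with hrdef
  have hr0 : 0 < r 0 := Real.rpow_pos_of_pos hεa _
  set ψ : ℝ → ℝ := fun t => t * r t with hψdef
  set U : Set ℝ := {t | 0 < ε * a t} with hUdef
  have hUopen : IsOpen U := isOpen_lt continuous_const (continuous_const.mul ha.continuous)
  have hU0 : (0:ℝ) ∈ U := hεa
  have hrat : ∀ t ∈ U, ContDiffAt ℝ (⊤:ℕ∞) r t := by
    intro t ht
    exact (Real.contDiffAt_rpow_const_of_ne (ne_of_gt ht)).comp t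
      ((contDiff_const.mul ha).contDiffAt)
  have hψat : ∀ t ∈ U, ContDiffAt ℝ (⊤:ℕ∞) ψ t := by
    intro t ht
    simp only [hψdef]
    exact contDiffAt_id.mul (hrat t ht)
  have hψpow : ∀ t ∈ U, ψ t ^ (k+1) = t ^ (k+1) * (ε * a t) := by
    intro t ht
    have hroot : (r t) ^ (k+1) = ε * a t := by
      simp only [hrdef]
      exact Real.rpow_inv_natCast_pow (le_of_lt ht) (Nat.succ_ne_zero k)
    simp only [hψdef]
    rw [mul_pow, hroot]
  have hψ0 : ψ 0 = 0 := by simp [hψdef]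
  have hsd : HasStrictDerivAt ψ (r 0) 0 := by
    have hrd : HasStrictDerivAt r (deriv r 0) 0 := (hrat 0 hU0).hasStrictDerivAt (by simp)
    have hmul := (hasStrictDerivAt_id (0:ℝ)).mul hrd
    simp only [hψdef, id, one_mul, zero_mul, add_zero] at hmul ⊢
    exact hmul
  have hsd' := hsd.hasStrictFDerivAt_equiv (ne_of_gt hr0)
  set e := HasStrictFDerivAt.toOpenPartialHomeomorph ψ hsd' with hedef
  have hecoe : ⇑e = ψ := HasStrictFDerivAt.toOpenPartialHomeomorph_coe hsd'
  have h0src : (0:ℝ) ∈ e.source := HasStrictFDerivAt.mem_toOpenPartialHomeomorph_source hsd'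
  have he00 : e 0 = 0 := by rw [show (e : ℝ → ℝ) = ψ from hecoe]; exact hψ0
  have h0tgt : (0:ℝ) ∈ e.target := by
    have := e.map_source h0src
    rwa [he00] at this
  have hsymm0 : e.symm 0 = 0 := by
    have := e.left_inv h0src
    rwa [he00] at this
  have hψd0 : deriv ψ 0 = r 0 := hsd.hasDerivAt.deriv
  have hWnhds : {t | t ∈ U ∧ deriv ψ t ≠ 0} ∈ 𝓝 (0:ℝ) := by
    have hψOn : ContDiffOn ℝ (⊤:ℕ∞) ψ U := fun t ht => (hψat t ht).contDiffWithinAt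
    have hcont : ContinuousAt (deriv ψ) 0 :=
      (hψOn.continuousOn_deriv_of_isOpen hUopen one_le_inf).continuousAt
        (hUopen.mem_nhds hU0)
    have hne : ∀ᶠ t in 𝓝 (0:ℝ), deriv ψ t ≠ 0 :=
      hcont.eventually_ne (by rw [hψd0]; exact ne_of_gt hr0)
    exact Filter.inter_mem (hUopen.mem_nhds hU0) hne
  set W := interior {t | t ∈ U ∧ deriv ψ t ≠ 0} with hWdef
  have hW0 : (0:ℝ) ∈ W := mem_interior_iff_mem_nhds.2 hWnhds
  set V := e.target ∩ e.symm ⁻¹' W with hVdef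
  have hVopen : IsOpen V := e.isOpen_inter_preimage_symm isOpen_interior
  have hV0 : (0:ℝ) ∈ V := ⟨h0tgt, by rw [Set.mem_preimage, hsymm0]; exact hW0⟩
  have hφ₀at : ∀ y ∈ V, ContDiffAt ℝ (⊤:ℕ∞) e.symm y := by
    intro y hy
    have hmem : (e.symm y) ∈ {t | t ∈ U ∧ deriv ψ t ≠ 0} := interior_subset hy.2
    refine e.contDiffAt_symm_deriv hmem.2 hy.1 ?_ ?_
    · rw [show (e : ℝ → ℝ) = ψ from hecoe]
      exact ((hψat _ hmem.1).differentiableAt (by simp)).hasDerivAt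
    · rw [show (e : ℝ → ℝ) = ψ from hecoe]; exact hψat _ hmem.1
  obtain ⟨δ, hδpos, hδ⟩ := Metric.isOpen_iff.1 hVopen 0 hV0
  set χ : ContDiffBump (0:ℝ) := ⟨δ/3, δ/2, by positivity, by linarith⟩ with hχdef
  have hrOut : χ.rOut = δ/2 := rfl
  have hrIn : χ.rIn = δ/3 := rfl
  set φ : ℝ → ℝ := fun x => χ x * e.symm x with hφdef
  have hφsmooth : ContDiff ℝ (⊤:ℕ∞) φ := by
    rw [contDiff_iff_contDiffAt]
    intro x
    by_cases hx : x ∈ Metric.ball (0:ℝ) δ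
    · exact (χ.contDiff.contDiffAt).mul (hφ₀at x (hδ hx))
    · have hxn : x ∉ tsupport (χ : ℝ → ℝ) := by
        rw [χ.tsupport_eq]
        intro hmem
        rw [hrOut] at hmem
        exact hx (Metric.closedBall_subset_ball (by linarith) hmem)
      have hev : φ =ᶠ[𝓝 x] (fun _ => (0:ℝ)) := by
        have hop : ∀ᶠ y in 𝓝 x, y ∉ tsupport (χ : ℝ → ℝ) :=
          (isClosed_tsupport _).isOpen_compl.eventually_mem hxn
        filter_upwards [hop] with y hy
        simp only [hφdef]
        rw [image_eq_zero_of_notMem_tsupport hy, zero_mul]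
      exact (contDiffAt_const (c := (0:ℝ))).congr_of_eventuallyEq hev
  have hev1 : φ =ᶠ[𝓝 (0:ℝ)] e.symm := by
    have hballmem : ∀ᶠ x in 𝓝 (0:ℝ), x ∈ Metric.ball (0:ℝ) (δ/3) :=
      Metric.ball_mem_nhds _ (by positivity)
    filter_upwards [hballmem] with x hx
    simp only [hφdef]
    rw [χ.one_of_mem_closedBall (by rw [hrIn]; exact Metric.ball_subset_closedBall hx), one_mul]
  have hφ0 : φ 0 = 0 := by rw [hev1.eq_of_nhds, hsymm0]
  have hinv : HasStrictDerivAt e.symm (r 0)⁻¹ 0 := by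
    have hg : ∀ᶠ x in 𝓝 (0:ℝ), e.symm (ψ x) = x := by
      filter_upwards [e.eventually_left_inverse h0src] with x hx
      rw [← show (e : ℝ → ℝ) = ψ from hecoe]
      exact hx
    have := hsd.to_local_left_inverse (ne_of_gt hr0) hg
    rwa [hψ0] at this
  have hφderiv : deriv φ 0 ≠ 0 := by
    rw [hev1.deriv_eq, hinv.hasDerivAt.deriv]
    exact inv_ne_zero (ne_of_gt hr0)
  obtain ⟨q, hq, hφq, -⟩ := hadamard_step hφsmooth
  refine ⟨fun x => q x ^ (k+1) * b (φ x), ε, φ, (hq.pow _).mul (hb.comp hφsmooth), hεor,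
    ⟨hφsmooth, hφ0, hφderiv⟩, ?_⟩
  have heq2 : ∀ x : ℝ, f (φ x) 1 = x ^ (k+1) * (q x ^ (k+1) * b (φ x)) := by
    intro x
    rw [hfb' (φ x)]
    have hx : φ x = x * q x := by rw [hφq x, hφ0]; ring
    rw [hx, mul_pow]
    ring
  have heq1 : ∀ᶠ x in 𝓝 (0:ℝ), f (φ x) 0 = ε * x ^ (k+1) := by
    have hVmem : ∀ᶠ x in 𝓝 (0:ℝ), x ∈ V := hVopen.eventually_mem hV0
    have hri : ∀ᶠ x in 𝓝 (0:ℝ), ψ (e.symm x) = x := by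
      filter_upwards [e.eventually_right_inverse h0tgt] with x hx
      rw [← show (e : ℝ → ℝ) = ψ from hecoe]
      exact hx
    filter_upwards [hVmem, hri, hev1] with x hxV hxri hxφ
    have hsU : e.symm x ∈ U := (interior_subset hxV.2).1
    rw [hxφ, hfa' (e.symm x)]
    have hx1 : ε * x ^ (k+1) = ε * (ψ (e.symm x) ^ (k+1)) := by rw [hxri]
    rw [hx1, hψpow _ hsU]
    have : ε * ((e.symm x) ^ (k+1) * (ε * a (e.symm x)))
        = (ε * ε) * ((e.symm x) ^ (k+1) * a (e.symm x)) := by ring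
    rw [this, hε2, one_mul]
  filter_upwards [heq1] with x hx1
  exact ⟨hx1, heq2 x⟩


lemma iteratedDeriv_neg' (n : ℕ) (g : ℝ → ℝ) (x : ℝ) :
    iteratedDeriv n (fun t => - g t) x = - iteratedDeriv n g x := by
  have hng : (fun t => -g t) = -g := rfl
  rw [hng, iteratedDeriv, iteratedDeriv, iteratedFDeriv_neg_apply]
  simp

end Aux

/-- If a plane curve germ `f = (f_1, f_2) : (ℝ,0) → (ℝ²,0)` has type `A_k`
(one component of type `A_k`, the other of type `A_{≥k}`), then there is a function germ
`h : (ℝ,0) → ℝ` such that `f` is `𝓐_0[SO(2)]`-equivalent to `x ↦ (± x^{k+1}, x^{k+1} h(x))`. -/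
theorem stmt_14 (k : ℕ) (f : ℝ → E 2) (hf : ContDiff ℝ (⊤ : ℕ∞) f) (hf0 : f 0 = 0)
    (htype :
      (TypeAk k (fun t => f t 0) ∧ TypeAgek k (fun t => f t 1)) ∨
      (TypeAk k (fun t => f t 1) ∧ TypeAgek k (fun t => f t 0))) :
    ∃ (h : ℝ → ℝ) (ε : ℝ), ContDiff ℝ (⊤ : ℕ∞) h ∧ (ε = 1 ∨ ε = -1) ∧
      A0SO2curve f (fun x => ![ε * x ^ (k + 1), x ^ (k + 1) * h x]) := by
  rcases htype with ⟨h1, h2⟩ | ⟨h1, h2⟩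
  · obtain ⟨h, ε, φ, hh, hεor, hLD, hev⟩ := main_case k f hf hf0 h1 h2
    refine ⟨h, ε, hh, hεor, φ, hLD, rotF 0, rotF_diff0G 0, ?_⟩
    filter_upwards [hev] with x hx
    funext i
    fin_cases i
    · simpa [rotF] using hx.1
    · simpa [rotF] using hx.2
  · set F : ℝ → E 2 := fun t => ![f t 1, -(f t 0)] with hFdef
    have hF : ContDiff ℝ (⊤ : ℕ∞) F := by
      refine contDiff_pi.2 fun i => ?_
      fin_cases i
      · simpa [hFdef, Function.comp_def] using (contDiff_apply (𝕜 := ℝ) (E := ℝ) 1).comp hf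
      · simpa [hFdef] using ((contDiff_apply (𝕜 := ℝ) (E := ℝ) 0).comp hf).neg
    have hF0 : F 0 = 0 := by
      funext i
      fin_cases i <;> simp [hFdef, hf0]
    have hc0 : (fun t => F t 0) = fun t => f t 1 := funext fun t => by simp [hFdef]
    have hc1 : (fun t => F t 1) = fun t => -(f t 0) := funext fun t => by simp [hFdef]
    have hAk : TypeAk k (fun t => F t 0) := by rw [hc0]; exact h1
    have hAgek : TypeAgek k (fun t => F t 1) := by
      rw [hc1]
      intro m hm1 hm2
      rw [iteratedDeriv_neg' m (fun t => f t 0) 0, h2 m hm1 hm2, neg_zero]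
    obtain ⟨h, ε, φ, hh, hεor, hLD, hev⟩ := main_case k F hF hF0 hAk hAgek
    refine ⟨h, ε, hh, hεor, φ, hLD, rotF (Real.pi/2), rotF_diff0G _, ?_⟩
    filter_upwards [hev] with x hx
    obtain ⟨hx0, hx1⟩ := hx
    rw [show F (φ x) 0 = f (φ x) 1 by simp [hFdef]] at hx0
    rw [show F (φ x) 1 = -(f (φ x) 0) by simp [hFdef]] at hx1
    funext i
    fin_cases i
    · show f (φ x) 0 = _
      simp only [rotF, Real.cos_pi_div_two, Real.sin_pi_div_two, Fin.mk_zero, Fin.mk_one,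
        Matrix.cons_val_zero, Matrix.cons_val_one, Matrix.head_cons]
      linarith
    · show f (φ x) 1 = _
      simp only [rotF, Real.cos_pi_div_two, Real.sin_pi_div_two, Fin.mk_zero, Fin.mk_one,
        Matrix.cons_val_zero, Matrix.cons_val_one, Matrix.head_cons]
      linarith
end
end

section
/- Suppose f = (f_1,f_2) and g = (g_1,g_2): (ℝ^n,0)→(ℝ^{p_1}×ℝ^{p_2},0) are immersion germs. Then f_2 and g_2 are A-equivalent if and only if f and g are A[T*_r(p_1,p_2)]-equivalent, i.e., projection A-equivalent: there exist a diffeomorphism germ φ:(ℝ^n,0)→(ℝ^n,0) and a diffeomorphism germ Ψ:(ℝ^{p_1}×ℝ^{p_2},0)→(ℝ^{p_1}×ℝ^{p_2},0) of the form Ψ(x,y) = (ψ_1(x,y), ψ_2(y)) such that Ψ∘f = g∘φ. -/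
open Filter Topology Matrix

noncomputable section

/-- `𝓐`-equivalence of map germs `(ℝ^n,0) → (ℝ^{p},0)`. -/
def Aequiv (n p : ℕ) (f g : E n → E p) : Prop :=
  ∃ φ : E n → E n, SourceDiffeo n φ ∧
    ∃ ψ : E p → E p, ContDiff ℝ (⊤ : ℕ∞) ψ ∧ ψ 0 = 0 ∧
      Function.Bijective ⇑(fderiv ℝ ψ 0) ∧
      ∀ᶠ x in 𝓝 (0 : E n), ψ (f x) = g (φ x)

/-- Projection `𝓐`-equivalence (i.e. `𝓐[T*_r(p_1,p_2)]`-equivalence) of map germs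
`(ℝ^n,0) → (ℝ^{p_1}×ℝ^{p_2},0)` with respect to the projection onto the second factor:
`Ψ ∘ f = g ∘ φ` where `Ψ(x,y) = (ψ_1(x,y), ψ_2(y))` is a diffeomorphism germ of the product. -/
def ProjAequiv (n p₁ p₂ : ℕ) (f₁ g₁ : E n → E p₁) (f₂ g₂ : E n → E p₂) : Prop :=
  ∃ φ : E n → E n, SourceDiffeo n φ ∧
    ∃ (ψ₁ : E p₁ × E p₂ → E p₁) (ψ₂ : E p₂ → E p₂),
      ContDiff ℝ (⊤ : ℕ∞) ψ₁ ∧ ContDiff ℝ (⊤ : ℕ∞) ψ₂ ∧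
      ψ₁ 0 = 0 ∧ ψ₂ 0 = 0 ∧
      Function.Bijective ⇑(fderiv ℝ (fun q : E p₁ × E p₂ => (ψ₁ q, ψ₂ q.2)) 0) ∧
      ∀ᶠ x in 𝓝 (0 : E n), (ψ₁ (f₁ x, f₂ x), ψ₂ (f₂ x)) = (g₁ (φ x), g₂ (φ x))

section LinAux
open Function

lemma aux_extend {V K : Type*} [AddCommGroup V] [Module ℝ V] [FiniteDimensional ℝ V]
    [AddCommGroup K] [Module ℝ K] [FiniteDimensional ℝ K]
    (a c : K →ₗ[ℝ] V) (ha : Injective a) (hc : Injective c) :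
    ∃ e : V ≃ₗ[ℝ] V, ∀ k, e (a k) = c k := by
  set S := LinearMap.range a with hSdef
  set R := LinearMap.range c with hRdef
  obtain ⟨S', hS⟩ := Submodule.exists_isCompl S
  obtain ⟨R', hR⟩ := Submodule.exists_isCompl R
  have hrk : Module.finrank ℝ S = Module.finrank ℝ R := by
    rw [hSdef, hRdef, LinearMap.finrank_range_of_inj ha, LinearMap.finrank_range_of_inj hc]
  have h1 := Submodule.finrank_add_eq_of_isCompl hS
  have h2 := Submodule.finrank_add_eq_of_isCompl hR
  have hrk' : Module.finrank ℝ S' = Module.finrank ℝ R' := by omega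
  obtain ⟨e'⟩ := FiniteDimensional.nonempty_linearEquiv_of_finrank_eq hrk'
  let ea : K ≃ₗ[ℝ] S := LinearEquiv.ofInjective a ha
  let ec : K ≃ₗ[ℝ] R := LinearEquiv.ofInjective c hc
  let mid : (S × S') ≃ₗ[ℝ] (R × R') := (ea.symm.trans ec).prodCongr e'
  let e : V ≃ₗ[ℝ] V :=
    (Submodule.prodEquivOfIsCompl S S' hS).symm.trans
      (mid.trans (Submodule.prodEquivOfIsCompl R R' hR))
  refine ⟨e, fun k => ?_⟩
  have hmem : a k ∈ S := LinearMap.mem_range_self a k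
  have hsymm : (Submodule.prodEquivOfIsCompl S S' hS).symm (a k) = (⟨a k, hmem⟩, 0) := by
    rw [LinearEquiv.symm_apply_eq]
    simp [Submodule.coe_prodEquivOfIsCompl]
  have heak : ea.symm ⟨a k, hmem⟩ = k := by
    apply ea.injective
    apply Subtype.ext
    rw [LinearEquiv.apply_symm_apply]
    exact (LinearEquiv.ofInjective_apply a (h := ha) k).symm
  show (Submodule.prodEquivOfIsCompl R R' hR)
      (mid ((Submodule.prodEquivOfIsCompl S S' hS).symm (a k))) = c k
  rw [hsymm]
  have hmid : mid (⟨a k, hmem⟩, 0) = (ec k, 0) := by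
    simp [mid, LinearEquiv.prodCongr_apply, heak]
  rw [hmid]
  have hfin : (Submodule.prodEquivOfIsCompl R R' hR) ((ec k), (0 : R')) = ((ec k : V) + ((0:R') : V)) := by
    simp [Submodule.coe_prodEquivOfIsCompl]
  rw [hfin, Submodule.coe_zero, add_zero]
  exact LinearEquiv.ofInjective_apply c (h := hc) k

lemma aux_D {U V W : Type*} [AddCommGroup U] [Module ℝ U] [FiniteDimensional ℝ U]
    [AddCommGroup V] [Module ℝ V] [FiniteDimensional ℝ V]
    [AddCommGroup W] [Module ℝ W] [FiniteDimensional ℝ W]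
    (A : U →ₗ[ℝ] V × W) (C : U →ₗ[ℝ] V)
    (hA : Injective A) (hker : ∀ u, (A u).2 = 0 → C u = 0 → u = 0) :
    ∃ D : (V × W) →ₗ[ℝ] V, D ∘ₗ A = C ∧ Bijective (fun x : V => D (x, 0)) := by
  set K := LinearMap.ker ((LinearMap.snd ℝ V W) ∘ₗ A) with hKdef
  let a : K →ₗ[ℝ] V := (LinearMap.fst ℝ V W) ∘ₗ A ∘ₗ K.subtype
  let c : K →ₗ[ℝ] V := C ∘ₗ K.subtype
  have hmemK : ∀ u : K, (A u).2 = 0 := fun u => u.2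
  have ha : Injective a := by
    intro u v huv
    have h1 : (A u).1 = (A v).1 := huv
    have h2 : (A u).2 = (A v).2 := by rw [hmemK u, hmemK v]
    exact Subtype.ext (hA (Prod.ext h1 h2))
  have hc : Injective c := by
    intro u v huv
    have : C ((u : U) - v) = 0 := by
      simp only [map_sub]
      simpa [c, sub_eq_zero] using huv
    have h2 : (A ((u : U) - v)).2 = 0 := by
      simp only [map_sub, Prod.snd_sub]
      rw [hmemK u, hmemK v, sub_zero]
    have := hker _ h2 this
    exact Subtype.ext (by rwa [sub_eq_zero] at this)
  obtain ⟨e, he⟩ := aux_extend a c ha hc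
  let G : (V × U) →ₗ[ℝ] V × W :=
    (LinearMap.inl ℝ V W) ∘ₗ (LinearMap.fst ℝ V U) + A ∘ₗ (LinearMap.snd ℝ V U)
  let H : (V × U) →ₗ[ℝ] V := e.toLinearMap ∘ₗ (LinearMap.fst ℝ V U) + C ∘ₗ (LinearMap.snd ℝ V U)
  have hG : ∀ x u, G (x, u) = (x, 0) + A u := fun x u => rfl
  have hH : ∀ x u, H (x, u) = e x + C u := fun x u => rfl
  have hle : LinearMap.ker G ≤ LinearMap.ker H := by
    rintro ⟨x, u⟩ hmem
    have h0 : (x, (0 : W)) + A u = 0 := by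
      have := (LinearMap.mem_ker).1 hmem
      rwa [hG] at this
    have hx : x = -(A u).1 := by
      have := congrArg Prod.fst h0
      simpa [eq_neg_iff_add_eq_zero] using this
    have hu2 : (A u).2 = 0 := by
      have := congrArg Prod.snd h0
      simpa using this
    have huK : u ∈ K := by simpa [hKdef, LinearMap.mem_ker] using hu2
    have key : e ((A u).1) = C u := he ⟨u, huK⟩
    rw [LinearMap.mem_ker, hH, hx, map_neg, key, neg_add_cancel]
  let Gbar := (LinearMap.ker G).liftQ G le_rfl
  have hGbar : LinearMap.ker Gbar = ⊥ := Submodule.ker_liftQ_eq_bot _ _ _ le_rfl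
  obtain ⟨Q', hQ'⟩ := Gbar.exists_leftInverse_of_injective hGbar
  let Hbar := (LinearMap.ker G).liftQ H hle
  refine ⟨Hbar ∘ₗ Q', ?_, ?_⟩
  · have key : ∀ v : V × U, (Hbar ∘ₗ Q') (G v) = H v := by
      intro v
      have h1 : G v = Gbar ((LinearMap.ker G).mkQ v) := rfl
      have h2 : Q' (Gbar ((LinearMap.ker G).mkQ v)) = (LinearMap.ker G).mkQ v := by
        have := congrArg (fun (f : _ →ₗ[ℝ] _) => f ((LinearMap.ker G).mkQ v)) hQ'
        simpa using this
      simp only [LinearMap.comp_apply, h1, h2]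
      rfl
    ext u
    have := key (0, u)
    simp only [hG, hH, Prod.mk.injEq] at this
    simpa [map_zero, Prod.mk_zero_zero] using this
  · have key : ∀ x : V, (Hbar ∘ₗ Q') (x, 0) = e x := by
      intro x
      have h1 : G (x, (0 : U)) = (x, 0) := by rw [hG]; simp
      have : (Hbar ∘ₗ Q') (G (x, (0:U))) = H (x, (0:U)) := by
        have h2 : Q' (Gbar ((LinearMap.ker G).mkQ (x, (0:U)))) = (LinearMap.ker G).mkQ (x, (0:U)) := by
          have := congrArg (fun (f : _ →ₗ[ℝ] _) => f ((LinearMap.ker G).mkQ (x, (0:U)))) hQ'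
          simpa using this
        show Hbar (Q' (G (x, (0:U)))) = _
        have h1' : G (x, (0:U)) = Gbar ((LinearMap.ker G).mkQ (x, (0:U))) := rfl
        rw [h1', h2]
        rfl
      rw [h1] at this
      rw [this, hH]
      simp
    have : (fun x : V => (Hbar ∘ₗ Q') (x, 0)) = ⇑e := funext key
    rw [this]
    exact e.bijective

end LinAux

set_option maxHeartbeats 1000000 in
/-- If `f = (f_1,f_2)` and `g = (g_1,g_2) : (ℝ^n,0) → (ℝ^{p_1}×ℝ^{p_2},0)`
are immersion germs, then `f_2` and `g_2` are `𝓐`-equivalent if and only if `f` and `g` are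
`𝓐[T*_r(p_1,p_2)]`-equivalent (projection `𝓐`-equivalent). -/
theorem stmt_16 (n p₁ p₂ : ℕ) (f₁ g₁ : E n → E p₁) (f₂ g₂ : E n → E p₂)
    (hf₁ : ContDiff ℝ (⊤ : ℕ∞) f₁) (hg₁ : ContDiff ℝ (⊤ : ℕ∞) g₁)
    (hf₂ : ContDiff ℝ (⊤ : ℕ∞) f₂) (hg₂ : ContDiff ℝ (⊤ : ℕ∞) g₂)
    (hf₁0 : f₁ 0 = 0) (hg₁0 : g₁ 0 = 0) (hf₂0 : f₂ 0 = 0) (hg₂0 : g₂ 0 = 0)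
    (hfimm : Function.Injective ⇑(fderiv ℝ (fun x => (f₁ x, f₂ x)) 0))
    (hgimm : Function.Injective ⇑(fderiv ℝ (fun x => (g₁ x, g₂ x)) 0)) :
    Aequiv n p₂ f₂ g₂ ↔ ProjAequiv n p₁ p₂ f₁ g₁ f₂ g₂ := by
  have h1 : ((⊤ : ℕ∞) : WithTop ℕ∞) ≠ 0 := by simp
  constructor
  · rintro ⟨φ, ⟨hφs, hφ0, hφbij⟩, ψ, hψ, hψ0, hψbij, heq⟩

    set f : E n → E p₁ × E p₂ := fun x => (f₁ x, f₂ x) with hfdef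
    have hf : ContDiff ℝ (⊤ : ℕ∞) f := hf₁.prodMk hf₂
    have hf0 : f 0 = 0 := by rw [hfdef]; exact Prod.ext hf₁0 hf₂0
    set A := fderiv ℝ f 0 with hAdef
    have hAinj : Function.Injective ⇑A := hfimm
    have hA2 : ∀ u, (A u).2 = fderiv ℝ f₂ 0 u := by
      have hAp : A = (fderiv ℝ f₁ 0).prod (fderiv ℝ f₂ 0) :=
        ((hf₁.differentiable h1 0).hasFDerivAt.prodMk (hf₂.differentiable h1 0).hasFDerivAt).fderiv
      intro u; rw [hAp]; rfl
    set C := fderiv ℝ (fun x => g₁ (φ x)) 0 with hCdef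
    have hCd : HasFDerivAt (fun x => g₁ (φ x)) C 0 :=
      ((hg₁.comp hφs).differentiable h1 0).hasFDerivAt
    have hC2d : HasFDerivAt (fun x => g₂ (φ x)) (fderiv ℝ (fun x => g₂ (φ x)) 0) 0 :=
      ((hg₂.comp hφs).differentiable h1 0).hasFDerivAt
    -- the kernel condition
    have hkerC : ∀ u, fderiv ℝ f₂ 0 u = 0 → C u = 0 → u = 0 := by
      intro u hu2 huC
      have e1 : fderiv ℝ (fun x => g₂ (φ x)) 0 = (fderiv ℝ ψ 0) ∘L (fderiv ℝ f₂ 0) := by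
        have hEq : (fun x => ψ (f₂ x)) =ᶠ[𝓝 (0 : E n)] (fun x => g₂ (φ x)) := heq
        rw [← hEq.fderiv_eq]
        have hout : HasFDerivAt ψ (fderiv ℝ ψ 0) (f₂ 0) := by
          rw [hf₂0]; exact (hψ.differentiable h1 0).hasFDerivAt
        exact (hout.comp 0 (hf₂.differentiable h1 0).hasFDerivAt).fderiv
      have hBθ : fderiv ℝ (fun x => (g₁ (φ x), g₂ (φ x))) 0
          = C.prod (fderiv ℝ (fun x => g₂ (φ x)) 0) := (hCd.prodMk hC2d).fderiv
      have hBφ : fderiv ℝ (fun x => (g₁ (φ x), g₂ (φ x))) 0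
          = (fderiv ℝ (fun x => (g₁ x, g₂ x)) 0) ∘L (fderiv ℝ φ 0) := by
        have hgd : HasFDerivAt (fun x => (g₁ x, g₂ x))
            (fderiv ℝ (fun x => (g₁ x, g₂ x)) 0) (φ 0) := by
          rw [hφ0]; exact ((hg₁.prodMk hg₂).differentiable h1 0).hasFDerivAt
        exact (hgd.comp 0 (hφs.differentiable h1 0).hasFDerivAt).fderiv
      have hzero : (fderiv ℝ (fun x => (g₁ x, g₂ x)) 0) ((fderiv ℝ φ 0) u) = 0 := by
        have hcomp := congrArg (fun (T : E n →L[ℝ] E p₁ × E p₂) => T u) (hBφ.symm.trans hBθ)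
        simp only [ContinuousLinearMap.comp_apply, ContinuousLinearMap.prod_apply] at hcomp
        rw [hcomp, huC, e1]
        simp [hu2]
      have hΦu : (fderiv ℝ φ 0) u = 0 := by
        apply hgimm
        rw [hzero, map_zero]
      apply hφbij.injective
      rw [hΦu, map_zero]
    -- the triangular derivative D
    obtain ⟨Dl, hDlA, hDlbij⟩ := aux_D (A : E n →ₗ[ℝ] E p₁ × E p₂) (C : E n →ₗ[ℝ] E p₁)
      hAinj (fun u h2 hc => hkerC u (by rw [← hA2 u]; exact h2) hc)
    set D : (E p₁ × E p₂) →L[ℝ] E p₁ := LinearMap.toContinuousLinearMap Dl with hDdef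
    have hDapp : ∀ q, D q = Dl q := fun q => rfl
    have hDA : ∀ u, D (A u) = C u := by
      intro u
      have := LinearMap.congr_fun hDlA u
      simpa [hDapp] using this
    have hDbij : Function.Bijective (fun x : E p₁ => D (x, 0)) := hDlbij
    -- left inverse L of A
    obtain ⟨L₀, hL₀⟩ := (A : E n →ₗ[ℝ] E p₁ × E p₂).exists_leftInverse_of_injective
      (LinearMap.ker_eq_bot.mpr hAinj)
    set L : (E p₁ × E p₂) →L[ℝ] E n := LinearMap.toContinuousLinearMap L₀ with hLdef
    have hLA : ∀ x, L (A x) = x := fun x => by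
      have := LinearMap.congr_fun hL₀ x
      exact this
    set α : E n → E n := fun x => L (f x) with hαdef
    have hαs : ContDiff ℝ (⊤ : ℕ∞) α := L.contDiff.comp hf
    have hα0 : α 0 = 0 := by rw [hαdef]; simp [hf0]
    have hαd : HasFDerivAt α (L ∘L A) 0 := L.hasFDerivAt.comp 0 (hf.differentiable h1 0).hasFDerivAt
    have hLAid : (L ∘L A) = ContinuousLinearMap.id ℝ (E n) :=
      ContinuousLinearMap.ext fun x => by simpa using hLA x
    have hαd' : HasFDerivAt α
        ((ContinuousLinearEquiv.refl ℝ (E n) : E n ≃L[ℝ] E n) : E n →L[ℝ] E n) 0 := by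
      have : ((ContinuousLinearEquiv.refl ℝ (E n) : E n ≃L[ℝ] E n) : E n →L[ℝ] E n)
          = L ∘L A := by rw [hLAid]; rfl
      rw [this]; exact hαd
    have hstrict : HasStrictFDerivAt α
        (((ContinuousLinearEquiv.refl ℝ (E n) : E n ≃L[ℝ] E n)) : E n →L[ℝ] E n) 0 :=
      hαs.contDiffAt.hasStrictFDerivAt' hαd' h1
    set P := hstrict.toOpenPartialHomeomorph α with hPdef
    have hPcoe : ⇑P = α := hstrict.toOpenPartialHomeomorph_coe
    have h0tgt : (0 : E n) ∈ P.target := by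
      have := hstrict.image_mem_toOpenPartialHomeomorph_target
      rwa [hα0] at this
    have hsymm0 : P.symm 0 = 0 := by
      have h2 := hstrict.localInverse_apply_image
      rw [hstrict.localInverse_def] at h2
      rwa [hα0] at h2
    have hleft : ∀ᶠ x in 𝓝 (0 : E n), P.symm (α x) = x := by
      have h2 := hstrict.eventually_left_inverse
      rw [hstrict.localInverse_def] at h2
      exact h2
    have hsymmd : HasFDerivAt (⇑P.symm)
        (((ContinuousLinearEquiv.refl ℝ (E n)).symm : E n ≃L[ℝ] E n) : E n →L[ℝ] E n) 0 := by
      have h2 := hstrict.to_localInverse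
      rw [hstrict.localInverse_def, hα0] at h2
      exact h2.hasFDerivAt
    -- smoothness of P.symm on a neighborhood of 0
    set s' : Set (E n) := {y | IsUnit (fderiv ℝ α y)} with hs'def
    have hs'open : IsOpen s' := Units.isOpen.preimage (hαs.continuous_fderiv h1)
    have h0s' : (0 : E n) ∈ s' := by
      have : fderiv ℝ α 0 = ContinuousLinearMap.id ℝ (E n) := by
        rw [hαd.fderiv, hLAid]
      show IsUnit (fderiv ℝ α 0)
      rw [this, ← ContinuousLinearMap.one_def]
      exact isUnit_one
    set t : Set (E n) := P.target ∩ ⇑P.symm ⁻¹' s' with htdef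
    have htopen : IsOpen t := P.symm.continuousOn.isOpen_inter_preimage P.open_target hs'open
    have h0t : (0 : E n) ∈ t := ⟨h0tgt, by rw [Set.mem_preimage, hsymm0]; exact h0s'⟩
    have hsymm_smooth : ContDiffOn ℝ (⊤ : ℕ∞) (⇑P.symm) t := by
      intro a ha
      obtain ⟨hat, has'⟩ := ha
      have hu : IsUnit (fderiv ℝ α (P.symm a)) := has'
      have hfd : HasFDerivAt (⇑P) (((ContinuousLinearEquiv.ofUnit hu.unit : E n ≃L[ℝ] E n) : E n →L[ℝ] E n)) (P.symm a) := by
        have hco : ((ContinuousLinearEquiv.ofUnit hu.unit : E n ≃L[ℝ] E n) : E n →L[ℝ] E n)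
            = fderiv ℝ α (P.symm a) := by
          ext v; rfl
        rw [hPcoe, hco]
        exact (hαs.differentiable h1 _).hasFDerivAt
      exact (P.contDiffAt_symm hat hfd (by rw [hPcoe]; exact hαs.contDiffAt)).contDiffWithinAt
    -- h : local left inverse of f
    set hmap : E p₁ × E p₂ → E n := fun q => P.symm (L q) with hhdef
    set u0 : Set (E p₁ × E p₂) := ⇑L ⁻¹' t with hu0def
    have hu0open : IsOpen u0 := htopen.preimage L.continuous
    have h0u0 : (0 : E p₁ × E p₂) ∈ u0 := by
      show L 0 ∈ t
      rw [map_zero]; exact h0t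
    have hh_on : ContDiffOn ℝ (⊤ : ℕ∞) hmap u0 :=
      hsymm_smooth.comp L.contDiff.contDiffOn fun q hq => hq
    have hh0 : hmap 0 = 0 := by rw [hhdef]; simp [hsymm0]
    have hhf : ∀ᶠ x in 𝓝 (0 : E n), hmap (f x) = x := hleft
    have hhd : HasFDerivAt hmap
        ((((ContinuousLinearEquiv.refl ℝ (E n)).symm : E n ≃L[ℝ] E n) : E n →L[ℝ] E n) ∘L L) 0 := by
      have hout : HasFDerivAt (⇑P.symm)
          (((ContinuousLinearEquiv.refl ℝ (E n)).symm : E n ≃L[ℝ] E n) : E n →L[ℝ] E n) (L 0) := by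
        rw [map_zero]; exact hsymmd
      exact hout.comp 0 L.hasFDerivAt
    set M := ((((ContinuousLinearEquiv.refl ℝ (E n)).symm : E n ≃L[ℝ] E n) : E n →L[ℝ] E n) ∘L L)
      with hMdef
    -- θ : the local model for ψ₁
    set θ : E p₁ × E p₂ → E p₁ := fun q => g₁ (φ (hmap q)) + D (q - f (hmap q)) with hθdef
    have hθ_on : ContDiffOn ℝ (⊤ : ℕ∞) θ u0 := by
      apply ContDiffOn.add
      · exact (hg₁.comp hφs).comp_contDiffOn hh_on
      · exact D.contDiff.comp_contDiffOn
          ((contDiff_id.contDiffOn).sub (hf.comp_contDiffOn hh_on))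
    have hθ0 : θ 0 = 0 := by
      rw [hθdef]
      simp [hh0, hf0, hφ0, hg₁0]
    have hθd : HasFDerivAt θ
        (C ∘L M + D ∘L (ContinuousLinearMap.id ℝ (E p₁ × E p₂) - A ∘L M)) 0 := by
      have t1 : HasFDerivAt (fun q => g₁ (φ (hmap q))) (C ∘L M) 0 := by
        have hout : HasFDerivAt (fun x => g₁ (φ x)) C (hmap 0) := by rw [hh0]; exact hCd
        exact hout.comp 0 hhd
      have t2 : HasFDerivAt (fun q : E p₁ × E p₂ => q - f (hmap q))
          (ContinuousLinearMap.id ℝ (E p₁ × E p₂) - A ∘L M) 0 := by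
        have hfh : HasFDerivAt (fun q => f (hmap q)) (A ∘L M) 0 := by
          have hout : HasFDerivAt f A (hmap 0) := by
            rw [hh0]; exact (hf.differentiable h1 0).hasFDerivAt
          exact hout.comp 0 hhd
        exact (hasFDerivAt_id 0).sub hfh
      have t3 : HasFDerivAt (fun q : E p₁ × E p₂ => D (q - f (hmap q)))
          (D ∘L (ContinuousLinearMap.id ℝ (E p₁ × E p₂) - A ∘L M)) 0 :=
        D.hasFDerivAt.comp 0 t2
      exact t1.add t3
    have hDeq : C ∘L M + D ∘L (ContinuousLinearMap.id ℝ (E p₁ × E p₂) - A ∘L M) = D := by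
      refine ContinuousLinearMap.ext fun q => ?_
      show C (M q) + D (q - A (M q)) = D q
      rw [map_sub, ← hDA (M q)]
      abel
    -- bump function and global ψ₁
    obtain ⟨r, hr0, hball⟩ := Metric.isOpen_iff.mp hu0open 0 h0u0
    set χ : ContDiffBump (0 : E p₁ × E p₂) := ⟨r/3, r/2, by positivity, by linarith⟩ with hχdef
    set Ψ₁ : E p₁ × E p₂ → E p₁ := fun q => χ q • θ q with hΨdef
    have hΨ0 : Ψ₁ 0 = 0 := by rw [hΨdef]; simp [hθ0]
    have hΨsmooth : ContDiff ℝ (⊤ : ℕ∞) Ψ₁ := by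
      rw [contDiff_iff_contDiffAt]
      intro q
      by_cases hq : q ∈ Metric.ball (0 : E p₁ × E p₂) r
      · exact χ.contDiff.contDiffAt.smul (hθ_on.contDiffAt (hu0open.mem_nhds (hball hq)))
      · have hnot : q ∉ tsupport ⇑χ := by
          rw [χ.tsupport_eq]
          intro hmem
          apply hq
          have : dist q (0 : E p₁ × E p₂) ≤ r/2 := Metric.mem_closedBall.mp hmem
          exact Metric.mem_ball.mpr (by linarith)
        have hout : Ψ₁ =ᶠ[𝓝 q] fun _ => (0 : E p₁) := by
          filter_upwards [(isOpen_compl_iff.mpr (isClosed_tsupport ⇑χ)).mem_nhds hnot] with p hp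
          rw [hΨdef]
          simp [image_eq_zero_of_notMem_tsupport hp]
        exact contDiffAt_const.congr_of_eventuallyEq hout
    have hΨnear : Ψ₁ =ᶠ[𝓝 (0 : E p₁ × E p₂)] θ := by
      filter_upwards [Metric.closedBall_mem_nhds (0 : E p₁ × E p₂) (by positivity : (0:ℝ) < r/3)]
        with q hq
      rw [hΨdef]
      simp [χ.one_of_mem_closedBall hq]
    have hΨd : HasFDerivAt Ψ₁ D 0 := by
      have : fderiv ℝ Ψ₁ 0 = D := by
        rw [hΨnear.fderiv_eq, hθd.fderiv, hDeq]
      rw [← this]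
      exact (hΨsmooth.differentiable h1 0).hasFDerivAt
    -- eventual equation for Ψ₁
    have heq1 : ∀ᶠ x in 𝓝 (0 : E n), Ψ₁ (f₁ x, f₂ x) = g₁ (φ x) := by
      have hsmall : ∀ᶠ x in 𝓝 (0 : E n), f x ∈ Metric.closedBall (0 : E p₁ × E p₂) (r/3) := by
        have := hf.continuous.tendsto' 0 0 hf0
        exact this (Metric.closedBall_mem_nhds _ (by positivity))
      filter_upwards [hsmall, hhf] with x hx hhx
      have : Ψ₁ (f x) = θ (f x) := by
        rw [hΨdef]
        simp [χ.one_of_mem_closedBall hx]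
      show Ψ₁ (f x) = g₁ (φ x)
      rw [this, hθdef]
      simp [hhx]
    -- the block derivative is bijective
    have hsnd : HasFDerivAt (fun q : E p₁ × E p₂ => ψ q.2)
        ((fderiv ℝ ψ 0) ∘L (ContinuousLinearMap.snd ℝ (E p₁) (E p₂))) 0 := by
      have h2 : HasFDerivAt ψ (fderiv ℝ ψ 0) ((0 : E p₁ × E p₂).2) :=
        (hψ.differentiable h1 0).hasFDerivAt
      exact h2.comp 0 (ContinuousLinearMap.snd ℝ (E p₁) (E p₂)).hasFDerivAt
    set T := D.prod ((fderiv ℝ ψ 0) ∘L (ContinuousLinearMap.snd ℝ (E p₁) (E p₂))) with hTdef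
    have hFd : fderiv ℝ (fun q : E p₁ × E p₂ => (Ψ₁ q, ψ q.2)) 0 = T := (hΨd.prodMk hsnd).fderiv
    have hTker : ∀ v, T v = 0 → v = 0 := by
      intro v hv
      have hv1 : D v = 0 := congrArg Prod.fst hv
      have hv2 : (fderiv ℝ ψ 0) v.2 = 0 := congrArg Prod.snd hv
      have hb : v.2 = 0 := hψbij.injective (by rw [hv2, map_zero])
      have hveq : v = (v.1, (0 : E p₂)) := by rw [← hb]
      have ha : v.1 = 0 := by
        apply hDbij.injective
        show D (v.1, 0) = D ((0 : E p₁), 0)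
        rw [← hveq, hv1]
        have : ((0 : E p₁), (0 : E p₂)) = (0 : E p₁ × E p₂) := rfl
        rw [this, map_zero]
      rw [hveq, ha]
      rfl
    have hTinj : Function.Injective ⇑T := by
      intro x y hxy
      have := hTker (x - y) (by rw [map_sub, hxy, sub_self])
      rwa [sub_eq_zero] at this
    have hTsurj : Function.Surjective ⇑T := LinearMap.injective_iff_surjective.mp hTinj
    refine ⟨φ, ⟨hφs, hφ0, hφbij⟩, Ψ₁, ψ, hΨsmooth, hψ, hΨ0, hψ0, ?_, ?_⟩
    · rw [hFd]
      exact ⟨hTinj, hTsurj⟩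
    · filter_upwards [heq1, heq] with x hx1 hx2
      exact Prod.ext hx1 hx2
  · rintro ⟨φ, hφ, ψ₁, ψ₂, hψ₁, hψ₂, h10, h20, hbij, heq⟩
    have hd1 : HasFDerivAt ψ₁ (fderiv ℝ ψ₁ 0) 0 := (hψ₁.differentiable h1 0).hasFDerivAt
    have hd2 : HasFDerivAt (fun q : E p₁ × E p₂ => ψ₂ q.2)
        ((fderiv ℝ ψ₂ 0) ∘L (ContinuousLinearMap.snd ℝ (E p₁) (E p₂))) 0 := by
      have h2 : HasFDerivAt ψ₂ (fderiv ℝ ψ₂ 0) ((0 : E p₁ × E p₂).2) :=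
        (hψ₂.differentiable h1 0).hasFDerivAt
      exact h2.comp 0 (ContinuousLinearMap.snd ℝ (E p₁) (E p₂)).hasFDerivAt
    have hF : fderiv ℝ (fun q : E p₁ × E p₂ => (ψ₁ q, ψ₂ q.2)) 0
        = (fderiv ℝ ψ₁ 0).prod ((fderiv ℝ ψ₂ 0) ∘L (ContinuousLinearMap.snd ℝ (E p₁) (E p₂))) :=
      (hd1.prodMk hd2).fderiv
    rw [hF] at hbij
    have hsurj : Function.Surjective ⇑(fderiv ℝ ψ₂ 0) := by
      intro c
      obtain ⟨v, hv⟩ := hbij.surjective ((0 : E p₁), c)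
      exact ⟨v.2, congrArg Prod.snd hv⟩
    have hinj : Function.Injective ⇑(fderiv ℝ ψ₂ 0) :=
      LinearMap.injective_iff_surjective.mpr hsurj
    exact ⟨φ, hφ, ψ₂, hψ₂, h20, ⟨hinj, hsurj⟩,
      heq.mono fun x hx => congrArg Prod.snd hx⟩
end
end
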